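/- arXiv:2410.04487 — 9 statements merged into one kernel-verified Lean document; each statement's English description precedes it below -/
import Mathlib

section
/- For all real x with |x| ≥ 2π, the absolute value of the integral ∫_{-1}^{1} e^{ixz} · (sin(πz)/(πz)) dz is at most 38π/(3x²). -/
open Real
open MeasureTheory intervalIntegral Set

-- inner integral computation: for c ≠ 0, ∫ u in a..b, exp(I*u*c) du
lemma aux_exp_int (a b c : ℝ) (hc : c ≠ 0) :
    (∫ u in a..b, Complex.exp (Complex.I * u * c)) =
      (Complex.exp (Complex.I * b * c) - Complex.exp (Complex.I * a * c)) /
        (Complex.I * c) := by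
  have hc' : (Complex.I * c : ℂ) ≠ 0 := by
    simp [Complex.I_ne_zero, Complex.ofReal_eq_zero, hc]
  have := integral_exp_mul_complex (a := a) (b := b) hc'
  simp only [show ∀ u : ℝ, (Complex.I * (c:ℂ)) * u = Complex.I * u * c by intro u; ring] at this
  rw [this]

theorem lanczos_fourier_bound (x : ℝ) (hx : |x| ≥ 2 * π) :
    ‖∫ z in (-1:ℝ)..1, Complex.exp (Complex.I * x * z) *
      ((Real.sin (π * z) / (π * z) : ℝ) : ℂ)‖ ≤ 38 * π / (3 * x ^ 2) := by
  have hπ := Real.pi_pos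
  have hxπ : π < |x| := lt_of_lt_of_le (by linarith) hx
  have hx0 : x ≠ 0 := by intro h; rw [h] at hxπ; simp at hxπ; linarith
  set a : ℝ := x - π with ha
  set b : ℝ := x + π with hb
  have hab : a ≤ b := by simp [ha, hb]; linarith
  -- step 1 : pointwise identity for z ≠ 0
  have key : ∀ z : ℝ, z ≠ 0 →
      Complex.exp (Complex.I * x * z) * ((Real.sin (π * z) / (π * z) : ℝ) : ℂ) =
        (2 * π : ℂ)⁻¹ * ∫ u in Set.Ioc a b, Complex.exp (Complex.I * u * z) := by
    intro z hz
    rw [← intervalIntegral.integral_of_le hab, aux_exp_int a b z hz]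
    have hsin : ((Real.sin (π * z) : ℝ) : ℂ) = Complex.sin (π * z) := by
      push_cast [Complex.ofReal_sin]; ring_nf
    have hz' : (z : ℂ) ≠ 0 := by exact_mod_cast hz
    have hπ' : (π : ℂ) ≠ 0 := by exact_mod_cast Real.pi_ne_zero
    rw [Complex.sin] at hsin
    push_cast [hsin, ha, hb]
    rw [show Complex.I * ((x:ℂ) + π) * z = Complex.I * x * z + (π * z) * Complex.I by ring,
      show Complex.I * ((x:ℂ) - π) * z = Complex.I * x * z + (-(π * z)) * Complex.I by ring,
      Complex.exp_add, Complex.exp_add]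
    field_simp
    ring_nf
    simp [Complex.I_sq]
  -- step 2 : replace integrand a.e.
  have h1 : (∫ z in (-1:ℝ)..1, Complex.exp (Complex.I * x * z) *
      ((Real.sin (π * z) / (π * z) : ℝ) : ℂ)) =
      ∫ z in Set.Ioc (-1:ℝ) 1, (2 * π : ℂ)⁻¹ *
        ∫ u in Set.Ioc a b, Complex.exp (Complex.I * u * z) := by
    rw [intervalIntegral.integral_of_le (by norm_num : (-1:ℝ) ≤ 1)]
    apply MeasureTheory.integral_congr_ae
    have h0 : ∀ᵐ z : ℝ ∂(volume.restrict (Set.Ioc (-1:ℝ) 1)), z ≠ 0 := by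
      refine MeasureTheory.ae_restrict_of_ae ?_
      refine MeasureTheory.ae_iff.mpr ?_
      simp [Real.volume_singleton]
    filter_upwards [h0] with z hz
    exact key z hz
  -- step 3 : Fubini swap
  have hswap : (∫ z in Set.Ioc (-1:ℝ) 1, ∫ u in Set.Ioc a b,
        Complex.exp (Complex.I * u * z)) =
      ∫ u in Set.Ioc a b, ∫ z in Set.Ioc (-1:ℝ) 1, Complex.exp (Complex.I * u * z) := by
    apply MeasureTheory.integral_integral_swap
    rw [Function.uncurry_def]
    have hcont : Continuous fun p : ℝ × ℝ => Complex.exp (Complex.I * p.2 * p.1) := by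
      fun_prop
    haveI : IsFiniteMeasure (volume.restrict (Set.Ioc (-1:ℝ) 1)) :=
      ⟨by simp [Real.volume_Ioc]⟩
    haveI : IsFiniteMeasure (volume.restrict (Set.Ioc a b)) :=
      ⟨by simp [Real.volume_Ioc]⟩
    refine (MeasureTheory.integrable_const (1:ℝ)).mono' hcont.aestronglyMeasurable ?_
    filter_upwards with p
    rw [show Complex.I * (p.2:ℂ) * p.1 = ((p.2 * p.1 : ℝ) : ℂ) * Complex.I by push_cast; ring]
    rw [Complex.norm_exp_ofReal_mul_I]
  -- step 4 : inner integral in z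
  have habs : ∀ u ∈ Set.Icc a b, |x| - π ≤ |u| ∧ |u - x| ≤ π := by
    intro u hu
    obtain ⟨h1, h2⟩ := hu
    simp only [ha] at h1
    simp only [hb] at h2
    have hux : |u - x| ≤ π := abs_le.mpr ⟨by linarith, by linarith⟩
    refine ⟨?_, hux⟩
    have h3 := abs_sub_abs_le_abs_sub x u
    rw [abs_sub_comm] at h3
    linarith
  have hu0 : ∀ u ∈ Set.Icc a b, u ≠ 0 := by
    intro u hu
    have h3 := (habs u hu).1
    intro h
    rw [h] at h3
    simp at h3
    linarith
  have key2 : ∀ u ∈ Set.Ioc a b,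
      (∫ z in Set.Ioc (-1:ℝ) 1, Complex.exp (Complex.I * u * z)) =
        ((2 * Real.sin u / u : ℝ) : ℂ) := by
    intro u hu
    have hu' := hu0 u (Set.Ioc_subset_Icc_self hu)
    rw [← intervalIntegral.integral_of_le (by norm_num : (-1:ℝ) ≤ 1)]
    simp only [show ∀ z : ℝ, Complex.I * (u:ℂ) * z = Complex.I * z * u by intro z; ring]
    rw [aux_exp_int (-1) 1 u hu']
    have hsin : ((Real.sin u : ℝ) : ℂ) = Complex.sin u := (Complex.ofReal_sin u).symm ▸ rfl
    have hu'' : (u : ℂ) ≠ 0 := by exact_mod_cast hu'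
    push_cast [Complex.ofReal_sin]
    rw [Complex.sin]
    rw [show Complex.I * (1:ℂ) * u = (u:ℂ) * Complex.I by ring,
      show Complex.I * (-1:ℂ) * u = -((u:ℂ)) * Complex.I by ring]
    field_simp
    ring_nf
    simp [Complex.I_sq]
    ring_nf
  -- step 5 : assemble
  rw [h1, MeasureTheory.integral_const_mul, hswap,
    MeasureTheory.setIntegral_congr_fun measurableSet_Ioc (fun u hu => key2 u hu),
    show (∫ u in Set.Ioc a b, ((2 * Real.sin u / u : ℝ) : ℂ)) =
      (((∫ u in Set.Ioc a b, 2 * Real.sin u / u : ℝ)) : ℂ) from integral_ofReal]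
  set J : ℝ := ∫ u in Set.Ioc a b, 2 * Real.sin u / u with hJ
  -- bound on J
  have hxabs : 0 < |x| - π := by linarith
  have hxpos : 0 < |x| := abs_pos.mpr hx0
  have hC : ∀ u ∈ Set.uIoc a b, ‖2 * Real.sin u / u - 2 * Real.sin u / x‖ ≤
      2 * π / ((|x| - π) * |x|) := by
    intro u hu
    rw [Set.uIoc_of_le hab] at hu
    have hu' := hu0 u (Set.Ioc_subset_Icc_self hu)
    obtain ⟨hb1, hb2⟩ := habs u (Set.Ioc_subset_Icc_self hu)
    have hupos : 0 < |u| := by linarith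
    have heq : 2 * Real.sin u / u - 2 * Real.sin u / x =
        2 * Real.sin u * (x - u) / (u * x) := by field_simp
    rw [heq, Real.norm_eq_abs, abs_div, abs_mul, abs_mul, abs_mul]
    have hsin : |Real.sin u| ≤ 1 := Real.abs_sin_le_one u
    have hxu : |x - u| ≤ π := by rw [abs_sub_comm]; exact hb2
    have h2 : |(2:ℝ)| = 2 := by norm_num
    rw [h2]
    have hnum : 2 * |Real.sin u| * |x - u| ≤ 2 * π := by
      have h4 := mul_le_mul hsin hxu (abs_nonneg _) zero_le_one
      linarith
    have hden : (|x| - π) * |x| ≤ |u| * |x| :=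
      mul_le_mul_of_nonneg_right hb1 (abs_nonneg x)
    have hdenpos : 0 < (|x| - π) * |x| := mul_pos hxabs hxpos
    exact div_le_div₀ (by positivity) hnum hdenpos hden
  have hicc : Set.uIcc a b = Set.Icc a b := Set.uIcc_of_le hab
  have hi1 : IntervalIntegrable (fun u => 2 * Real.sin u / u) volume a b := by
    apply ContinuousOn.intervalIntegrable
    rw [hicc]
    exact ContinuousOn.div (by fun_prop) continuousOn_id (fun u hu => hu0 u hu)
  have hi2 : IntervalIntegrable (fun u => 2 * Real.sin u / x) volume a b := by
    apply Continuous.intervalIntegrable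
    fun_prop
  have hJsplit : J = (∫ u in a..b, (2 * Real.sin u / u - 2 * Real.sin u / x)) +
      ∫ u in a..b, 2 * Real.sin u / x := by
    rw [← intervalIntegral.integral_add (hi1.sub hi2) hi2]
    rw [hJ, ← intervalIntegral.integral_of_le hab]
    congr 1
    funext u
    ring
  have hJ2 : (∫ u in a..b, 2 * Real.sin u / x) = 0 := by
    have hfun : (fun u : ℝ => 2 * Real.sin u / x) = fun u => (2/x) * Real.sin u := by
      funext u; ring
    rw [hfun, intervalIntegral.integral_const_mul, integral_sin, ha, hb]
    simp [Real.cos_add_pi, Real.cos_sub_pi]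
  have hJ1 : |∫ u in a..b, (2 * Real.sin u / u - 2 * Real.sin u / x)| ≤
      2 * π / ((|x| - π) * |x|) * |b - a| :=
    intervalIntegral.norm_integral_le_of_norm_le_const hC
  have hba : |b - a| = 2 * π := by
    rw [hb, ha]; rw [show x + π - (x - π) = 2*π by ring]; rw [abs_of_pos (by linarith)]
  have hJbound : |J| ≤ 4 * π ^ 2 / ((|x| - π) * |x|) := by
    rw [hJsplit, hJ2, add_zero]
    calc |∫ u in a..b, (2 * Real.sin u / u - 2 * Real.sin u / x)|
        ≤ 2 * π / ((|x| - π) * |x|) * |b - a| := hJ1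
      _ = 4 * π ^ 2 / ((|x| - π) * |x|) := by rw [hba]; field_simp; ring
  -- final numeric
  have hnorm : ‖(2 * (π:ℂ))⁻¹ * ((J:ℝ) : ℂ)‖ = (2 * π)⁻¹ * |J| := by
    rw [norm_mul, norm_inv, Complex.norm_real, Real.norm_eq_abs]
    congr 1
    rw [show (2 * (π:ℂ)) = ((2 * π : ℝ) : ℂ) by push_cast; ring, Complex.norm_real,
      Real.norm_eq_abs, abs_of_pos (by linarith)]
  rw [hnorm]
  have hx2 : x ^ 2 = |x| ^ 2 := (sq_abs x).symm
  have hfin : (2 * π)⁻¹ * (4 * π ^ 2 / ((|x| - π) * |x|)) ≤ 38 * π / (3 * x ^ 2) := by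
    rw [hx2]
    have heq2 : (2 * π)⁻¹ * (4 * π ^ 2 / ((|x| - π) * |x|)) =
        2 * π / ((|x| - π) * |x|) := by
      field_simp
      ring
    rw [heq2, div_le_div_iff₀ (mul_pos hxabs hxpos) (by positivity)]
    have h1 : |x| / 2 ≤ |x| - π := by linarith
    have h3 := mul_le_mul_of_nonneg_right h1 (abs_nonneg x)
    nlinarith [mul_le_mul_of_nonneg_left h3 (by positivity : (0:ℝ) ≤ 38 * π),
      mul_nonneg hπ.le (sq_nonneg |x|)]
  calc (2 * π)⁻¹ * |J| ≤ (2 * π)⁻¹ * (4 * π ^ 2 / ((|x| - π) * |x|)) := by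
        apply mul_le_mul_of_nonneg_left hJbound (by positivity)
    _ ≤ 38 * π / (3 * x ^ 2) := hfin
end

section
/- For the Lanczos filter σ(z) = sin(πz)/(πz), the function φ(y) = ∫_{-1}^{1} e^{iyz} σ(z) dz satisfies φ'(y) = -2 sin(y)/((π+y)(π-y)) for |y| > π. -/
open Real MeasureTheory intervalIntegral Metric

noncomputable def Fl (x z : ℝ) : ℂ :=
  Complex.exp (Complex.I * x * z) * ((Real.sin (π * z) / (π * z) : ℝ) : ℂ)

noncomputable def Fl' (x z : ℝ) : ℂ :=
  Complex.I * z * Complex.exp (Complex.I * x * z) * ((Real.sin (π * z) / (π * z) : ℝ) : ℂ)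

lemma sinc_abs_le (t : ℝ) : |Real.sin t / t| ≤ 1 := by
  rcases eq_or_ne t 0 with h | h
  · simp [h]
  · rw [abs_div]
    exact div_le_one_of_le₀ Real.abs_sin_le_abs (abs_nonneg t)

lemma norm_exp_I_mul (x z : ℝ) : ‖Complex.exp (Complex.I * x * z)‖ = 1 := by
  rw [show Complex.I * (x:ℂ) * z = ((x*z : ℝ):ℂ) * Complex.I by push_cast; ring]
  exact Complex.norm_exp_ofReal_mul_I _

lemma Fl_norm_le (x z : ℝ) : ‖Fl x z‖ ≤ 1 := by
  rw [Fl, norm_mul, norm_exp_I_mul, one_mul, Complex.norm_real, Real.norm_eq_abs]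
  simpa [mul_comm] using sinc_abs_le (π * z)

lemma Fl'_norm_le (x z : ℝ) (hz : |z| ≤ 1) : ‖Fl' x z‖ ≤ 1 := by
  rw [Fl']
  simp only [norm_mul, Complex.norm_I, one_mul, norm_exp_I_mul, mul_one,
    Complex.norm_real, Real.norm_eq_abs]
  calc |z| * |Real.sin (π * z) / (π * z)| ≤ 1 * 1 :=
        mul_le_mul hz (sinc_abs_le _) (abs_nonneg _) zero_le_one
    _ = 1 := one_mul 1

lemma Fl_meas (x : ℝ) : AEStronglyMeasurable (Fl x) (volume.restrict (Set.uIoc (-1:ℝ) 1)) := by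
  apply Measurable.aestronglyMeasurable
  unfold Fl
  fun_prop

lemma Fl'_meas (x : ℝ) : AEStronglyMeasurable (Fl' x) (volume.restrict (Set.uIoc (-1:ℝ) 1)) := by
  apply Measurable.aestronglyMeasurable
  unfold Fl'
  fun_prop

lemma Fl_int (x : ℝ) : IntervalIntegrable (Fl x) volume (-1) 1 := by
  apply IntervalIntegrable.mono_fun (_root_.intervalIntegrable_const (c := (1:ℝ))) (Fl_meas x)
  filter_upwards with z
  simpa using Fl_norm_le x z

lemma Fl_hasDerivAt (x z : ℝ) : HasDerivAt (fun x => Fl x z) (Fl' x z) x := by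
  have h1 : HasDerivAt (fun w : ℂ => Complex.exp (Complex.I * w * z))
      (Complex.I * z * Complex.exp (Complex.I * x * z)) (x : ℝ) := by
    have h0 : HasDerivAt (fun w : ℂ => Complex.I * w * z) (Complex.I * z) (x : ℂ) := by
      simpa using ((hasDerivAt_id (x : ℂ)).const_mul Complex.I).mul_const (z : ℂ)
    simpa [mul_comm, Function.comp_def] using (Complex.hasDerivAt_exp _).comp (x : ℂ) h0
  have := (h1.comp_ofReal).mul_const ((Real.sin (π * z) / (π * z) : ℝ) : ℂ)
  simpa [Fl, Fl', mul_assoc, mul_comm, mul_left_comm] using this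

lemma Fl'_eq (y z : ℝ) : Fl' y z =
    (1 / (2 * π)) * (Complex.exp (Complex.I * (y + π) * z) - Complex.exp (Complex.I * (y - π) * z)) := by
  rcases eq_or_ne z 0 with rfl | hz
  · simp [Fl']
  · have hπz : ((π : ℂ) * z) ≠ 0 := by
      exact mul_ne_zero (by exact_mod_cast Real.pi_ne_zero) (by exact_mod_cast hz)
    rw [Fl', show ((Real.sin (π * z) / (π * z) : ℝ) : ℂ) = Complex.sin (π * z) / (π * z) by
      push_cast [Complex.ofReal_sin]; ring_nf]
    rw [Complex.sin, show Complex.I * (y + π) * z = Complex.I * y * z + (π * z) * Complex.I by ring,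
      show Complex.I * (y - π) * z = Complex.I * y * z + (-(π * z) * Complex.I) by ring,
      Complex.exp_add, Complex.exp_add]
    have hπ : ((π : ℝ) : ℂ) ≠ 0 := by exact_mod_cast Real.pi_ne_zero
    have hzc : ((z : ℝ) : ℂ) ≠ 0 := by exact_mod_cast hz
    field_simp
    ring_nf
    simp only [Complex.I_sq]
    ring

lemma exp_diff_eq (a : ℂ) :
    Complex.exp (Complex.I * a * 1) - Complex.exp (Complex.I * a * (-1))
      = 2 * Complex.I * Complex.sin a := by
  rw [show Complex.I * a * 1 = a * Complex.I by ring,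
    show Complex.I * a * (-1) = -a * Complex.I by ring, Complex.sin]
  ring_nf
  simp only [Complex.I_sq]
  ring

lemma key (y : ℝ) (hy : |y| > π) :
    (∫ z in (-1:ℝ)..1, Fl' y z)
      = ((-2 * Real.sin y / ((π + y) * (π - y)) : ℝ) : ℂ) := by
  have hπpos := Real.pi_pos
  have h1 : y + π ≠ 0 := by rcases lt_abs.mp hy with h | h <;> [linarith; linarith]
  have h2 : y - π ≠ 0 := by rcases lt_abs.mp hy with h | h <;> [linarith; linarith]
  have hc1 : (Complex.I * ((y : ℂ) + (π : ℂ))) ≠ 0 := by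
    apply mul_ne_zero Complex.I_ne_zero
    exact_mod_cast h1
  have hc2 : (Complex.I * ((y : ℂ) - (π : ℂ))) ≠ 0 := by
    apply mul_ne_zero Complex.I_ne_zero
    exact_mod_cast h2
  rw [intervalIntegral.integral_congr (g := fun z : ℝ =>
      (1 / (2 * (π : ℂ))) * (Complex.exp (Complex.I * ((y : ℂ) + π) * z)
        - Complex.exp (Complex.I * ((y : ℂ) - π) * z)))
    (fun z _ => by simpa using Fl'_eq y z)]
  rw [intervalIntegral.integral_const_mul,
    intervalIntegral.integral_sub
      (Continuous.intervalIntegrable (by fun_prop) _ _)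
      (Continuous.intervalIntegrable (by fun_prop) _ _),
    integral_exp_mul_complex hc1, integral_exp_mul_complex hc2]
  push_cast
  rw [exp_diff_eq, exp_diff_eq, Complex.sin_add_pi, Complex.sin_sub_pi]
  have hπc : ((π : ℝ) : ℂ) ≠ 0 := by exact_mod_cast Real.pi_ne_zero
  have h1c : ((y : ℂ) + π) ≠ 0 := by exact_mod_cast h1
  have h2c : ((y : ℂ) - π) ≠ 0 := by exact_mod_cast h2
  have h3c : ((π : ℂ) + y) ≠ 0 := by rw [add_comm]; exact h1c
  have h4c : ((π : ℂ) - y) ≠ 0 := by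
    intro h
    apply h2c
    rw [sub_eq_zero] at h ⊢
    exact h.symm
  field_simp
  ring_nf

theorem lanczos_fourier_deriv (y : ℝ) (hy : |y| > π) :
    HasDerivAt (fun y : ℝ => ∫ z in (-1:ℝ)..1, Complex.exp (Complex.I * y * z) *
        ((Real.sin (π * z) / (π * z) : ℝ) : ℂ))
      (((-2 * Real.sin y / ((π + y) * (π - y)) : ℝ) : ℂ)) y := by
  have main := intervalIntegral.hasDerivAt_integral_of_dominated_loc_of_deriv_le
    (F := Fl) (F' := Fl') (x₀ := y) (a := (-1:ℝ)) (b := 1) (μ := volume)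
    (bound := fun _ => 1) (s := Metric.ball y 1) (Metric.ball_mem_nhds y one_pos)
    (Filter.Eventually.of_forall fun x => Fl_meas x)
    (Fl_int y) (Fl'_meas y)
    (Filter.Eventually.of_forall fun t ht x _ => Fl'_norm_le x t (by
      rw [Set.uIoc_of_le (by norm_num : (-1:ℝ) ≤ 1)] at ht
      rw [abs_le]; exact ⟨ht.1.le, ht.2⟩))
    intervalIntegrable_const
    (Filter.Eventually.of_forall fun t _ x _ => Fl_hasDerivAt x t)
  have h2 := main.2
  rw [key y hy] at h2
  exact h2
end

section
/- For the raised cosine filter, its Fourier transform ŝ(y) = -π² sin(y)/(y³ - yπ²) satisfies |ŝ(y)| ≤ 4π²/(3|y|³) for all |y| ≥ 2π. -/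
open Real

theorem raised_cosine_fourier_bound (y : ℝ) (hy : |y| ≥ 2 * π) :
    |(-(π ^ 2) * Real.sin y / (y ^ 3 - y * π ^ 2))| ≤ 4 * π ^ 2 / (3 * |y| ^ 3) := by
  have hπ : 0 < π := pi_pos
  have ha0 : 0 < |y| := by nlinarith
  have hnum : |(-(π ^ 2) * Real.sin y)| ≤ π ^ 2 := by
    rw [abs_mul, abs_neg, abs_pow, abs_of_pos hπ]
    nlinarith [abs_sin_le_one y, abs_nonneg (Real.sin y), sq_nonneg π]
  have hyp : π ^ 2 ≤ |y| ^ 2 / 4 := by nlinarith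
  have hden : 3 / 4 * |y| ^ 3 ≤ |y ^ 3 - y * π ^ 2| := by
    have h1 : y ^ 3 - y * π ^ 2 = y * (y ^ 2 - π ^ 2) := by ring
    have h2 : (0:ℝ) ≤ y ^ 2 - π ^ 2 := by nlinarith [sq_abs y]
    rw [h1, abs_mul, abs_of_nonneg h2]
    nlinarith [sq_abs y]
  rw [abs_div, div_le_div_iff₀ (lt_of_lt_of_le (by positivity) hden) (by positivity)]
  nlinarith [abs_nonneg (-(π ^ 2) * Real.sin y), pow_pos ha0 3]
end

section
/- For α > 0 and 0 < |x| ≤ 2π, |∫_0^1 cos(tx) e^{-αt²} (1 - 2αt²) dt| ≤ (1 + 4e^{-1})/|x|. -/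
open Real

private lemma aux_ue (u : ℝ) : u * Real.exp (-u) ≤ Real.exp (-1) := by
  have h1 : u ≤ Real.exp (u - 1) := by
    have := Real.add_one_le_exp (u - 1); linarith
  calc u * Real.exp (-u) ≤ Real.exp (u - 1) * Real.exp (-u) :=
        mul_le_mul_of_nonneg_right h1 (Real.exp_pos _).le
    _ = Real.exp (-1) := by rw [← Real.exp_add]; ring_nf

private lemma hasDerivAt_negsq (α t : ℝ) :
    HasDerivAt (fun t : ℝ => -α * t ^ 2) (-α * (2 * t)) t := by
  simpa using (hasDerivAt_pow 2 t).const_mul (-α)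

private lemma hasDerivAt_G (α t : ℝ) :
    HasDerivAt (fun t => Real.exp (-α * t ^ 2) * (1 - 2 * α * t ^ 2))
      (Real.exp (-α * t ^ 2) * (-2 * α * t) * (3 - 2 * α * t ^ 2)) t := by
  have h1 := (hasDerivAt_negsq α t).exp
  have h2 : HasDerivAt (fun t : ℝ => 1 - 2 * α * t ^ 2) (-(2 * α * (2 * t))) t := by
    simpa using ((hasDerivAt_pow 2 t).const_mul (2 * α)).const_sub 1
  refine (h1.mul h2).congr_deriv ?_
  ring

private lemma hasDerivAt_F (α x : ℝ) (hx : x ≠ 0) (t : ℝ) :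
    HasDerivAt (fun t => Real.sin (t * x) / x * (Real.exp (-α * t ^ 2) * (1 - 2 * α * t ^ 2)))
      (Real.cos (t * x) * (Real.exp (-α * t ^ 2) * (1 - 2 * α * t ^ 2))
        + Real.sin (t * x) / x * (Real.exp (-α * t ^ 2) * (-2 * α * t) * (3 - 2 * α * t ^ 2))) t := by
  have hs : HasDerivAt (fun t : ℝ => Real.sin (t * x) / x) (Real.cos (t * x)) t := by
    have h1 : HasDerivAt (fun t : ℝ => t * x) x t := hasDerivAt_mul_const x
    have h2 := h1.sin.div_const x
    refine h2.congr_deriv ?_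
    field_simp
  exact hs.mul (hasDerivAt_G α t)

private lemma hasDerivAt_h2 (α t : ℝ) :
    HasDerivAt (fun t : ℝ => 2 * α * t ^ 2 * Real.exp (-α * t ^ 2))
      (4 * α * t * Real.exp (-α * t ^ 2) * (1 - α * t ^ 2)) t := by
  have h1 : HasDerivAt (fun t : ℝ => 2 * α * t ^ 2) (2 * α * (2 * t)) t := by
    simpa using (hasDerivAt_pow 2 t).const_mul (2 * α)
  refine (h1.mul (hasDerivAt_negsq α t).exp).congr_deriv ?_
  ring

private lemma hasDerivAt_h1 (α t : ℝ) :
    HasDerivAt (fun t : ℝ => -Real.exp (-α * t ^ 2)) (2 * α * t * Real.exp (-α * t ^ 2)) t := by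
  refine (hasDerivAt_negsq α t).exp.neg.congr_deriv ?_
  ring

private lemma intA (α : ℝ) :
    ∫ t in (0:ℝ)..1, 2 * α * t * Real.exp (-α * t ^ 2) = 1 - Real.exp (-α) := by
  have h := intervalIntegral.integral_eq_sub_of_hasDerivAt (a := (0:ℝ)) (b := 1)
    (f := fun t : ℝ => -Real.exp (-α * t ^ 2)) (fun t _ => hasDerivAt_h1 α t)
    (by apply Continuous.intervalIntegrable; fun_prop)
  rw [h]; norm_num; ring

private lemma intB (α : ℝ) (hα : 0 < α) :
    ∫ t in (0:ℝ)..1, 4 * α * t * Real.exp (-α * t ^ 2) * |1 - α * t ^ 2|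
      ≤ 4 * Real.exp (-1) - 2 * α * Real.exp (-α) := by
  rcases le_or_gt α 1 with h | h
  · have hcong : Set.EqOn (fun t : ℝ => 4 * α * t * Real.exp (-α * t ^ 2) * |1 - α * t ^ 2|)
        (fun t : ℝ => 4 * α * t * Real.exp (-α * t ^ 2) * (1 - α * t ^ 2)) (Set.uIcc 0 1) := by
      intro t ht
      rw [Set.uIcc_of_le (by norm_num : (0:ℝ) ≤ 1)] at ht
      simp only
      rw [abs_of_nonneg]
      have ht2 : t ^ 2 ≤ 1 := by nlinarith [ht.1, ht.2]
      nlinarith [ht2, hα.le]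
    rw [intervalIntegral.integral_congr hcong]
    have hftc := intervalIntegral.integral_eq_sub_of_hasDerivAt (a := (0:ℝ)) (b := 1)
      (f := fun t : ℝ => 2 * α * t ^ 2 * Real.exp (-α * t ^ 2)) (fun t _ => hasDerivAt_h2 α t)
      (by apply Continuous.intervalIntegrable; fun_prop)
    rw [hftc]
    have hue := aux_ue α
    norm_num
    nlinarith [hue]
  · set s := (Real.sqrt α)⁻¹ with hsdef
    have hsa : 1 < Real.sqrt α := by
      rw [show (1:ℝ) = Real.sqrt 1 by simp]
      exact Real.sqrt_lt_sqrt (by norm_num) h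
    have hs0 : 0 < s := inv_pos.mpr (by linarith)
    have hs1 : s < 1 := by
      rw [hsdef]
      exact inv_lt_one_of_one_lt₀ hsa
    have hkey : α * s ^ 2 = 1 := by
      rw [hsdef, inv_pow, Real.sq_sqrt hα.le]
      field_simp
    have hcont : Continuous (fun t : ℝ => 4 * α * t * Real.exp (-α * t ^ 2) * |1 - α * t ^ 2|) := by
      fun_prop
    rw [← intervalIntegral.integral_add_adjacent_intervals
      (hcont.intervalIntegrable 0 s) (hcont.intervalIntegrable s 1)]
    have e1 : (∫ t in (0:ℝ)..s, 4 * α * t * Real.exp (-α * t ^ 2) * |1 - α * t ^ 2|)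
        = 2 * Real.exp (-1) := by
      have hcong : Set.EqOn (fun t : ℝ => 4 * α * t * Real.exp (-α * t ^ 2) * |1 - α * t ^ 2|)
          (fun t : ℝ => 4 * α * t * Real.exp (-α * t ^ 2) * (1 - α * t ^ 2)) (Set.uIcc 0 s) := by
        intro t ht
        rw [Set.uIcc_of_le hs0.le] at ht
        simp only
        rw [abs_of_nonneg]
        have ht2 : t ^ 2 ≤ s ^ 2 := by nlinarith [ht.1, ht.2]
        nlinarith [ht2, hα.le, hkey]
      rw [intervalIntegral.integral_congr hcong]
      have hftc := intervalIntegral.integral_eq_sub_of_hasDerivAt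
        (a := (0:ℝ)) (b := s)
        (f := fun t : ℝ => 2 * α * t ^ 2 * Real.exp (-α * t ^ 2)) (fun t _ => hasDerivAt_h2 α t)
        (by apply Continuous.intervalIntegrable; fun_prop)
      rw [hftc]
      rw [show -α * s ^ 2 = -1 by rw [neg_mul, hkey],
        show 2 * α * s ^ 2 = 2 by rw [mul_assoc, hkey, mul_one]]
      norm_num
    have e2 : (∫ t in s..(1:ℝ), 4 * α * t * Real.exp (-α * t ^ 2) * |1 - α * t ^ 2|)
        = 2 * Real.exp (-1) - 2 * α * Real.exp (-α) := by
      have hcong : Set.EqOn (fun t : ℝ => 4 * α * t * Real.exp (-α * t ^ 2) * |1 - α * t ^ 2|)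
          (fun t : ℝ => -(4 * α * t * Real.exp (-α * t ^ 2) * (1 - α * t ^ 2))) (Set.uIcc s 1) := by
        intro t ht
        rw [Set.uIcc_of_le hs1.le] at ht
        simp only
        have ht2 : s ^ 2 ≤ t ^ 2 := by nlinarith [ht.1, ht.2, hs0.le]
        have hnp : 1 - α * t ^ 2 ≤ 0 := by nlinarith [ht2, hα.le, hkey]
        rw [abs_of_nonpos hnp]
        ring
      rw [intervalIntegral.integral_congr hcong]
      have hftc := intervalIntegral.integral_eq_sub_of_hasDerivAt
        (a := s) (b := (1:ℝ))
        (f := fun t : ℝ => -(2 * α * t ^ 2 * Real.exp (-α * t ^ 2)))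
        (fun t _ => (hasDerivAt_h2 α t).neg)
        (by apply Continuous.intervalIntegrable; fun_prop)
      rw [hftc]
      rw [show -α * s ^ 2 = -1 by rw [neg_mul, hkey],
        show 2 * α * s ^ 2 = 2 by rw [mul_assoc, hkey, mul_one]]
      norm_num
      ring
    rw [e1, e2]
    linarith

theorem exp_filter_third_term_bound (α x : ℝ) (hα : 0 < α) (hx0 : 0 < |x|) (hx : |x| ≤ 2 * π) :
    |∫ t in (0:ℝ)..1, Real.cos (t * x) * Real.exp (-α * t ^ 2) * (1 - 2 * α * t ^ 2)|
      ≤ (1 + 4 * Real.exp (-1)) / |x| := by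
  have hx' : x ≠ 0 := by
    intro hxx; rw [hxx] at hx0; simp at hx0
  have hfc : Continuous (fun t : ℝ =>
      Real.cos (t * x) * (Real.exp (-α * t ^ 2) * (1 - 2 * α * t ^ 2))) := by fun_prop
  have hgc : Continuous (fun t : ℝ =>
      Real.sin (t * x) / x * (Real.exp (-α * t ^ 2) * (-2 * α * t) * (3 - 2 * α * t ^ 2))) := by
    apply Continuous.mul
    · exact Continuous.div_const (by fun_prop) x
    · fun_prop
  have hsum := intervalIntegral.integral_eq_sub_of_hasDerivAt (a := (0:ℝ)) (b := 1)
    (f := fun t => Real.sin (t * x) / x * (Real.exp (-α * t ^ 2) * (1 - 2 * α * t ^ 2)))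
    (fun t _ => hasDerivAt_F α x hx' t) ((hfc.add hgc).intervalIntegrable 0 1)
  simp only [one_mul, one_pow, mul_one, zero_mul, Real.sin_zero, zero_div, mul_zero, zero_sub,
    sub_zero, zero_pow, Real.exp_zero, zero_add] at hsum
  rw [intervalIntegral.integral_add (hfc.intervalIntegrable 0 1)
    (hgc.intervalIntegrable 0 1)] at hsum
  have horig : (∫ t in (0:ℝ)..1, Real.cos (t * x) * Real.exp (-α * t ^ 2) * (1 - 2 * α * t ^ 2))
      = ∫ t in (0:ℝ)..1, Real.cos (t * x) * (Real.exp (-α * t ^ 2) * (1 - 2 * α * t ^ 2)) := by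
    apply intervalIntegral.integral_congr
    intro t _
    ring
  have hIf : (∫ t in (0:ℝ)..1, Real.cos (t * x) * (Real.exp (-α * t ^ 2) * (1 - 2 * α * t ^ 2)))
      = Real.sin x / x * (Real.exp (-α) * (1 - 2 * α))
        - ∫ t in (0:ℝ)..1, Real.sin (t * x) / x
            * (Real.exp (-α * t ^ 2) * (-2 * α * t) * (3 - 2 * α * t ^ 2)) := by
    linarith [hsum]
  rw [horig, hIf]
  -- bound the boundary term
  have hSb : |Real.sin x / x * (Real.exp (-α) * (1 - 2 * α))|
      ≤ Real.exp (-α) * (1 + 2 * α) / |x| := by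
    rw [abs_mul, abs_div, abs_mul, Real.abs_exp]
    have h1 : |Real.sin x| ≤ 1 := Real.abs_sin_le_one x
    have h2 : |1 - 2 * α| ≤ 1 + 2 * α := by
      rw [abs_le]; constructor <;> linarith
    calc |Real.sin x| / |x| * (Real.exp (-α) * |1 - 2 * α|)
        ≤ 1 / |x| * (Real.exp (-α) * (1 + 2 * α)) := by
          gcongr
      _ = Real.exp (-α) * (1 + 2 * α) / |x| := by ring
  -- bound the integral term
  have hJb : |∫ t in (0:ℝ)..1, Real.sin (t * x) / x
        * (Real.exp (-α * t ^ 2) * (-2 * α * t) * (3 - 2 * α * t ^ 2))|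
      ≤ (1 - Real.exp (-α) + (4 * Real.exp (-1) - 2 * α * Real.exp (-α))) / |x| := by
    have hbc : Continuous (fun t : ℝ => |x|⁻¹ * (2 * α * t * Real.exp (-α * t ^ 2)
        + 4 * α * t * Real.exp (-α * t ^ 2) * |1 - α * t ^ 2|)) := by fun_prop
    have h1 : |∫ t in (0:ℝ)..1, Real.sin (t * x) / x
          * (Real.exp (-α * t ^ 2) * (-2 * α * t) * (3 - 2 * α * t ^ 2))|
        ≤ ∫ t in (0:ℝ)..1, |Real.sin (t * x) / x
          * (Real.exp (-α * t ^ 2) * (-2 * α * t) * (3 - 2 * α * t ^ 2))| := by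
      have hni := intervalIntegral.norm_integral_le_integral_norm
        (μ := MeasureTheory.volume) (f := fun t : ℝ => Real.sin (t * x) / x
          * (Real.exp (-α * t ^ 2) * (-2 * α * t) * (3 - 2 * α * t ^ 2)))
        (by norm_num : (0:ℝ) ≤ 1)
      simp only [Real.norm_eq_abs] at hni
      exact hni
    have h2 : (∫ t in (0:ℝ)..1, |Real.sin (t * x) / x
          * (Real.exp (-α * t ^ 2) * (-2 * α * t) * (3 - 2 * α * t ^ 2))|)
        ≤ ∫ t in (0:ℝ)..1, |x|⁻¹ * (2 * α * t * Real.exp (-α * t ^ 2)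
          + 4 * α * t * Real.exp (-α * t ^ 2) * |1 - α * t ^ 2|) := by
      apply intervalIntegral.integral_mono_on (by norm_num)
        (hgc.abs.intervalIntegrable 0 1) (hbc.intervalIntegrable 0 1)
      intro t ht
      have ht0 : 0 ≤ t := ht.1
      have e1 : |Real.sin (t * x) / x * (Real.exp (-α * t ^ 2) * (-2 * α * t) * (3 - 2 * α * t ^ 2))|
          = |Real.sin (t * x)| * |x|⁻¹ * (Real.exp (-α * t ^ 2) * (2 * α * t) * |3 - 2 * α * t ^ 2|) := by
        rw [abs_mul, abs_div, abs_mul, abs_mul, Real.abs_exp,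
          abs_of_nonpos (show -2 * α * t ≤ 0 by nlinarith), div_eq_mul_inv]
        ring
      rw [e1]
      have h1' : |Real.sin (t * x)| ≤ 1 := Real.abs_sin_le_one _
      have h2' : |3 - 2 * α * t ^ 2| ≤ 1 + 2 * |1 - α * t ^ 2| := by
        calc |3 - 2 * α * t ^ 2| = |1 + 2 * (1 - α * t ^ 2)| := by ring_nf
          _ ≤ |1| + |2 * (1 - α * t ^ 2)| := abs_add_le _ _
          _ = 1 + 2 * |1 - α * t ^ 2| := by rw [abs_one, abs_mul]; norm_num
      calc |Real.sin (t * x)| * |x|⁻¹ * (Real.exp (-α * t ^ 2) * (2 * α * t) * |3 - 2 * α * t ^ 2|)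
          ≤ 1 * |x|⁻¹ * (Real.exp (-α * t ^ 2) * (2 * α * t) * (1 + 2 * |1 - α * t ^ 2|)) := by
            gcongr
        _ = |x|⁻¹ * (2 * α * t * Real.exp (-α * t ^ 2)
            + 4 * α * t * Real.exp (-α * t ^ 2) * |1 - α * t ^ 2|) := by ring
    have h3 : (∫ t in (0:ℝ)..1, |x|⁻¹ * (2 * α * t * Real.exp (-α * t ^ 2)
          + 4 * α * t * Real.exp (-α * t ^ 2) * |1 - α * t ^ 2|))
        = |x|⁻¹ * ∫ t in (0:ℝ)..1, (2 * α * t * Real.exp (-α * t ^ 2)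
          + 4 * α * t * Real.exp (-α * t ^ 2) * |1 - α * t ^ 2|) :=
      intervalIntegral.integral_const_mul _ _
    have h4 : (∫ t in (0:ℝ)..1, (2 * α * t * Real.exp (-α * t ^ 2)
          + 4 * α * t * Real.exp (-α * t ^ 2) * |1 - α * t ^ 2|))
        = (∫ t in (0:ℝ)..1, 2 * α * t * Real.exp (-α * t ^ 2))
          + ∫ t in (0:ℝ)..1, 4 * α * t * Real.exp (-α * t ^ 2) * |1 - α * t ^ 2| := by
      apply intervalIntegral.integral_add
      · apply Continuous.intervalIntegrable; fun_prop
      · apply Continuous.intervalIntegrable; fun_prop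
    have h5 := intA α
    have h6 := intB α hα
    have hxinv : (0:ℝ) ≤ |x|⁻¹ := by positivity
    calc |∫ t in (0:ℝ)..1, Real.sin (t * x) / x
          * (Real.exp (-α * t ^ 2) * (-2 * α * t) * (3 - 2 * α * t ^ 2))|
        ≤ ∫ t in (0:ℝ)..1, |x|⁻¹ * (2 * α * t * Real.exp (-α * t ^ 2)
          + 4 * α * t * Real.exp (-α * t ^ 2) * |1 - α * t ^ 2|) := le_trans h1 h2
      _ = |x|⁻¹ * ((∫ t in (0:ℝ)..1, 2 * α * t * Real.exp (-α * t ^ 2))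
          + ∫ t in (0:ℝ)..1, 4 * α * t * Real.exp (-α * t ^ 2) * |1 - α * t ^ 2|) := by
            rw [h3, h4]
      _ ≤ |x|⁻¹ * (1 - Real.exp (-α) + (4 * Real.exp (-1) - 2 * α * Real.exp (-α))) := by
            apply mul_le_mul_of_nonneg_left _ hxinv
            rw [h5]
            linarith [h6]
      _ = (1 - Real.exp (-α) + (4 * Real.exp (-1) - 2 * α * Real.exp (-α))) / |x| := by
            rw [inv_mul_eq_div]
  calc |Real.sin x / x * (Real.exp (-α) * (1 - 2 * α))
        - ∫ t in (0:ℝ)..1, Real.sin (t * x) / x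
            * (Real.exp (-α * t ^ 2) * (-2 * α * t) * (3 - 2 * α * t ^ 2))|
      ≤ |Real.sin x / x * (Real.exp (-α) * (1 - 2 * α))|
        + |∫ t in (0:ℝ)..1, Real.sin (t * x) / x
            * (Real.exp (-α * t ^ 2) * (-2 * α * t) * (3 - 2 * α * t ^ 2))| := abs_sub _ _
    _ ≤ Real.exp (-α) * (1 + 2 * α) / |x|
        + (1 - Real.exp (-α) + (4 * Real.exp (-1) - 2 * α * Real.exp (-α))) / |x| := by
          exact add_le_add hSb hJb
    _ = (1 + 4 * Real.exp (-1)) / |x| := by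
          rw [← add_div]
          congr 1
          ring
end

section
/- For α > 0 and x ≠ 0, |∫_0^1 cos(tx) t² e^{-αt²} dt| ≤ 2e^{-1}/(α|x|). -/
open Real

private noncomputable def Gf (α t : ℝ) : ℝ := t ^ 2 * Real.exp (-α * t ^ 2)
private noncomputable def Gf' (α t : ℝ) : ℝ := (2 * t - 2 * α * t ^ 3) * Real.exp (-α * t ^ 2)

private lemma hasDerivAt_Gf (α t : ℝ) : HasDerivAt (Gf α) (Gf' α t) t := by
  have h1 : HasDerivAt (fun t : ℝ => -α * t ^ 2) (-α * (2 * t)) t := by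
    simpa using ((hasDerivAt_pow 2 t).const_mul (-α))
  have h3 := (hasDerivAt_pow 2 t).mul h1.exp
  refine HasDerivAt.congr_deriv (f := Gf α) h3 ?_
  simp only [Gf', Nat.cast_ofNat, pow_one]
  ring

private lemma continuous_Gf' (α : ℝ) : Continuous (Gf' α) := by
  unfold Gf'; fun_prop

private lemma key_bound (α : ℝ) (hα : 0 < α) :
    Gf α 1 + ∫ t in (0:ℝ)..1, |Gf' α t| ≤ 2 * Real.exp (-1) / α := by
  have hint : ∀ a b : ℝ, IntervalIntegrable (fun t => |Gf' α t|) MeasureTheory.volume a b :=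
    fun a b => ((continuous_Gf' α).abs).intervalIntegrable a b
  rcases le_or_gt α 1 with hα1 | hα1
  · -- G' ≥ 0 on [0,1]
    have habs : Set.EqOn (fun t => |Gf' α t|) (Gf' α) (Set.uIcc (0:ℝ) 1) := by
      intro t ht
      rw [Set.uIcc_of_le (by norm_num)] at ht
      have h0 : 0 ≤ t := ht.1
      have h1 : t ≤ 1 := ht.2
      have ht3 : t ^ 3 ≤ t := by nlinarith [mul_nonneg (mul_nonneg h0 h0) (sub_nonneg.mpr h1), mul_nonneg h0 (sub_nonneg.mpr h1)]
      have ht3' : α * t ^ 3 ≤ t ^ 3 := by nlinarith [pow_nonneg h0 3]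
      have hnn : (0:ℝ) ≤ 2 * t - 2 * α * t ^ 3 := by linarith
      simp only [Gf']
      exact abs_of_nonneg (mul_nonneg hnn (Real.exp_pos _).le)
    rw [intervalIntegral.integral_congr habs,
      intervalIntegral.integral_eq_sub_of_hasDerivAt
        (fun t _ => hasDerivAt_Gf α t) ((continuous_Gf' α).intervalIntegrable 0 1)]
    have hG0 : Gf α 0 = 0 := by simp [Gf]
    have hG1 : Gf α 1 = Real.exp (-α) := by simp [Gf]
    rw [hG0, hG1]
    -- 2 * exp (-α) ≤ 2 * exp (-1) / α  ⟺  α * exp (-α) ≤ exp (-1)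
    have h1 : α ≤ Real.exp (α - 1) := by
      have := Real.add_one_le_exp (α - 1); linarith
    have h2 : α * Real.exp (-α) ≤ Real.exp (-1) := by
      calc α * Real.exp (-α) ≤ Real.exp (α - 1) * Real.exp (-α) := by
            exact mul_le_mul_of_nonneg_right h1 (Real.exp_pos _).le
        _ = Real.exp (-1) := by rw [← Real.exp_add]; ring_nf
    rw [le_div_iff₀ hα]
    nlinarith [Real.exp_pos (-α)]
  · -- α > 1 : split at s = 1/√α
    set s : ℝ := (Real.sqrt α)⁻¹ with hs
    have hsqrt : 0 < Real.sqrt α := Real.sqrt_pos.mpr hα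
    have hs0 : 0 < s := inv_pos.mpr hsqrt
    have hs2 : s ^ 2 = α⁻¹ := by
      rw [hs, inv_pow, Real.sq_sqrt hα.le]
    have hαs2 : α * s ^ 2 = 1 := by
      rw [hs2]; field_simp
    have hs1 : s ≤ 1 := by
      rw [hs, inv_le_one_iff₀]
      right
      have : (1:ℝ) ≤ Real.sqrt α := by
        rw [show (1:ℝ) = Real.sqrt 1 by simp]
        exact Real.sqrt_le_sqrt hα1.le
      linarith
    have hsplit :
        (∫ t in (0:ℝ)..s, |Gf' α t|) + (∫ t in s..1, |Gf' α t|)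
          = ∫ t in (0:ℝ)..1, |Gf' α t| :=
      intervalIntegral.integral_add_adjacent_intervals (hint 0 s) (hint s 1)
    have habs1 : Set.EqOn (fun t => |Gf' α t|) (Gf' α) (Set.uIcc (0:ℝ) s) := by
      intro t ht
      rw [Set.uIcc_of_le hs0.le] at ht
      have h0 : 0 ≤ t := ht.1
      have h1 : t ≤ s := ht.2
      have hαt : α * t ^ 2 ≤ 1 := by
        calc α * t ^ 2 ≤ α * s ^ 2 := by
              exact mul_le_mul_of_nonneg_left (by nlinarith) hα.le
          _ = 1 := hαs2
      have hnn : (0:ℝ) ≤ 2 * t - 2 * α * t ^ 3 := by nlinarith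
      simp only [Gf']
      exact abs_of_nonneg (mul_nonneg hnn (Real.exp_pos _).le)
    have habs2 : Set.EqOn (fun t => |Gf' α t|) (fun t => -Gf' α t) (Set.uIcc s 1) := by
      intro t ht
      rw [Set.uIcc_of_le hs1] at ht
      have h0 : s ≤ t := ht.1
      have h1 : t ≤ 1 := ht.2
      have ht0 : 0 < t := lt_of_lt_of_le hs0 h0
      have hαt : 1 ≤ α * t ^ 2 := by
        calc (1:ℝ) = α * s ^ 2 := hαs2.symm
          _ ≤ α * t ^ 2 := mul_le_mul_of_nonneg_left (by nlinarith) hα.le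
      have hnp : 2 * t - 2 * α * t ^ 3 ≤ 0 := by nlinarith
      simp only [Gf']
      exact abs_of_nonpos (mul_nonpos_of_nonpos_of_nonneg hnp (Real.exp_pos _).le)
    have hI1 : (∫ t in (0:ℝ)..s, |Gf' α t|) = Gf α s - Gf α 0 := by
      rw [intervalIntegral.integral_congr habs1]
      exact intervalIntegral.integral_eq_sub_of_hasDerivAt
        (fun t _ => hasDerivAt_Gf α t) ((continuous_Gf' α).intervalIntegrable 0 s)
    have hI2 : (∫ t in s..(1:ℝ), |Gf' α t|) = -(Gf α 1 - Gf α s) := by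
      rw [intervalIntegral.integral_congr habs2, intervalIntegral.integral_neg,
        intervalIntegral.integral_eq_sub_of_hasDerivAt
          (fun t _ => hasDerivAt_Gf α t) ((continuous_Gf' α).intervalIntegrable s 1)]
    have hGs : Gf α s = Real.exp (-1) / α := by
      simp only [Gf, hs2]
      rw [show -α * α⁻¹ = -1 by field_simp]
      rw [div_eq_inv_mul]
    have hG0 : Gf α 0 = 0 := by simp [Gf]
    rw [← hsplit, hI1, hI2, hGs, hG0]
    ring_nf
    linarith
open Real

theorem exp_filter_second_term_bound (α x : ℝ) (hα : 0 < α) (hx : x ≠ 0) :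
    |∫ t in (0:ℝ)..1, Real.cos (t * x) * t ^ 2 * Real.exp (-α * t ^ 2)|
      ≤ 2 * Real.exp (-1) / (α * |x|) := by
  have hx' : (0:ℝ) < |x| := abs_pos.mpr hx
  have hv : ∀ t ∈ Set.uIcc (0:ℝ) 1,
      HasDerivAt (fun t => Real.sin (t * x) / x) (Real.cos (t * x)) t := by
    intro t _
    have h1 : HasDerivAt (fun t : ℝ => t * x) x t := hasDerivAt_mul_const x
    have h2 := (h1.sin).div_const x
    refine h2.congr_deriv ?_
    field_simp
  have hu : ∀ t ∈ Set.uIcc (0:ℝ) 1, HasDerivAt (Gf α) (Gf' α t) t :=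
    fun t _ => hasDerivAt_Gf α t
  have hu' : IntervalIntegrable (Gf' α) MeasureTheory.volume 0 1 :=
    (continuous_Gf' α).intervalIntegrable 0 1
  have hv' : IntervalIntegrable (fun t => Real.cos (t * x)) MeasureTheory.volume 0 1 := by
    apply Continuous.intervalIntegrable; fun_prop
  have hIBP := intervalIntegral.integral_mul_deriv_eq_deriv_mul hu hv hu' hv'
  have hre : (∫ t in (0:ℝ)..1, Real.cos (t * x) * t ^ 2 * Real.exp (-α * t ^ 2))
      = ∫ t in (0:ℝ)..1, Gf α t * Real.cos (t * x) := by
    apply intervalIntegral.integral_congr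
    intro t _
    simp only [Gf]
    ring
  have hG0 : Gf α 0 = 0 := by simp [Gf]
  have hz : Gf α 0 * (Real.sin (0 * x) / x) = 0 := by rw [hG0]; ring
  rw [hre, hIBP, hz, sub_zero]
  set A := Gf α 1 * (Real.sin (1 * x) / x) with hA
  set I := ∫ t in (0:ℝ)..1, Gf' α t * (Real.sin (t * x) / x) with hI
  have hG1nn : 0 ≤ Gf α 1 := by
    simp only [Gf]
    positivity
  have hsin : ∀ y : ℝ, |Real.sin y| ≤ 1 := fun y =>
    abs_le.mpr ⟨Real.neg_one_le_sin y, Real.sin_le_one y⟩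
  have hb1 : |A| ≤ Gf α 1 / |x| := by
    rw [hA, abs_mul, abs_div, abs_of_nonneg hG1nn, div_eq_mul_inv, div_eq_mul_inv,
      ← mul_assoc]
    have h2 : Gf α 1 * |Real.sin (1 * x)| ≤ Gf α 1 :=
      mul_le_of_le_one_right hG1nn (hsin _)
    exact mul_le_mul_of_nonneg_right h2 (by positivity)
  have hintabs : IntervalIntegrable (fun t => |Gf' α t|) MeasureTheory.volume 0 1 :=
    ((continuous_Gf' α).abs).intervalIntegrable 0 1
  have hb2 : |I| ≤ (∫ t in (0:ℝ)..1, |Gf' α t|) / |x| := by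
    calc |I| ≤ ∫ t in (0:ℝ)..1, |Gf' α t * (Real.sin (t * x) / x)| :=
          intervalIntegral.abs_integral_le_integral_abs (by norm_num)
      _ ≤ ∫ t in (0:ℝ)..1, |Gf' α t| / |x| := by
          apply intervalIntegral.integral_mono_on (by norm_num)
          · apply Continuous.intervalIntegrable
            apply Continuous.abs
            have := continuous_Gf' α
            fun_prop
          · exact hintabs.div_const _
          · intro t _
            rw [abs_mul, abs_div, div_eq_mul_inv, div_eq_mul_inv, ← mul_assoc]
            have h2 : |Gf' α t| * |Real.sin (t * x)| ≤ |Gf' α t| :=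
              mul_le_of_le_one_right (abs_nonneg _) (hsin _)
            exact mul_le_mul_of_nonneg_right h2 (by positivity)
      _ = (∫ t in (0:ℝ)..1, |Gf' α t|) / |x| := by
          rw [intervalIntegral.integral_div]
  calc |A - I| ≤ |A| + |I| := abs_sub _ _
    _ ≤ Gf α 1 / |x| + (∫ t in (0:ℝ)..1, |Gf' α t|) / |x| := add_le_add hb1 hb2
    _ = (Gf α 1 + ∫ t in (0:ℝ)..1, |Gf' α t|) / |x| := by rw [add_div]
    _ ≤ (2 * Real.exp (-1) / α) / |x| := by
        gcongr
        exact key_bound α hα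
    _ = 2 * Real.exp (-1) / (α * |x|) := by rw [div_div]
end

section
/- For x in the open interval (-π, π) and any fixed c ∈ (0, π), the Fourier series Σ_{k=1}^∞ (2/(kπ)) cos(kc) sin(kx) converges pointwise to H(x) - x/π, where H(x) = 1 for c ≤ x ≤ π, H(x) = 0 for -c < x < c, and H(x) = -1 for -π ≤ x < -c, at every point x where H is continuous. -/
open Real
open Filter Finset

lemma sin_series_tendsto {θ : ℝ} (h0 : 0 < θ) (h2 : θ < 2 * π) :
    Tendsto (fun K : ℕ => ∑ k ∈ Finset.Icc 1 K, Real.sin (k * θ) / k) atTop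
      (nhds ((π - θ) / 2)) := by
  have hpi := Real.pi_pos
  set e : ℂ := Complex.exp (θ * Complex.I) with he
  have hnorm : ‖e‖ = 1 := Complex.norm_exp_ofReal_mul_I θ
  have hene : e ≠ 1 := by
    intro h
    rw [he, Complex.exp_eq_one_iff] at h
    obtain ⟨n, hn⟩ := h
    have hθ : θ = n * (2 * π) := by
      have := congrArg Complex.im hn
      simpa using this
    have h1' : (0:ℝ) < n := by nlinarith [hθ ▸ h0]
    have h2' : (n:ℝ) < 1 := by nlinarith [hθ ▸ h2]
    have : (1:ℤ) ≤ n := by exact_mod_cast h1'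
    have : (1:ℝ) ≤ (n:ℝ) := by exact_mod_cast this
    linarith
  have h1e : (1:ℂ) - e ≠ 0 := sub_ne_zero.mpr (Ne.symm hene)
  have hposn : 0 < ‖1 - e‖ := norm_pos_iff.mpr h1e
  -- bounded partial sums of e^(i+1)
  have hbound : ∀ n : ℕ, ‖∑ i ∈ range n, e ^ (i + 1)‖ ≤ 2 / ‖1 - e‖ := by
    intro n
    have hsum : ∑ i ∈ range n, e ^ (i + 1) = e * ((e ^ n - 1) / (e - 1)) := by
      have : ∑ i ∈ range n, e ^ (i + 1) = e * ∑ i ∈ range n, e ^ i := by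
        rw [Finset.mul_sum]; exact Finset.sum_congr rfl fun i _ => by ring
      rw [this, geom_sum_eq hene]
    rw [hsum, norm_mul, norm_div, hnorm, one_mul, ← norm_neg (e - 1), neg_sub]
    have hb : ‖e ^ n - 1‖ ≤ 2 := by
      calc ‖e ^ n - 1‖ ≤ ‖e ^ n‖ + ‖(1:ℂ)‖ := norm_sub_le _ _
      _ = 2 := by rw [norm_pow, hnorm]; norm_num
    gcongr
  -- Dirichlet test: partial sums converge to some L
  have hcau : CauchySeq fun n => ∑ i ∈ range n, (fun i : ℕ => (1 : ℝ) / (i + 1)) i •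
      (fun i : ℕ => e ^ (i + 1)) i := by
    apply Antitone.cauchySeq_series_mul_of_tendsto_zero_of_bounded
    · intro a b hab
      apply one_div_le_one_div_of_le (by positivity)
      exact_mod_cast by omega
    · exact tendsto_one_div_add_atTop_nhds_zero_nat
    · exact hbound
  obtain ⟨L, hL⟩ := cauchySeq_tendsto_of_complete hcau
  -- rewrite as partial sums of F n = e^n / n
  set F : ℕ → ℂ := fun n => e ^ n / n with hF
  have hshift : ∀ n : ℕ, ∑ i ∈ range (n + 1), F i = ∑ i ∈ range n,
      (fun i : ℕ => (1 : ℝ) / (i + 1)) i • (fun i : ℕ => e ^ (i + 1)) i := by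
    intro n
    rw [Finset.sum_range_succ']
    simp only [hF, pow_zero, Nat.cast_zero, div_zero, add_zero]
    refine Finset.sum_congr rfl fun i _ => ?_
    push_cast
    rw [Complex.real_smul]
    push_cast
    ring
  have hLF : Tendsto (fun n => ∑ i ∈ range n, F i) atTop (nhds L) := by
    rw [← tendsto_add_atTop_iff_nat 1]
    exact (Tendsto.congr (fun n => (hshift n).symm) hL)
  -- Abel's limit theorem
  have hAbel := Complex.tendsto_tsum_powerSeries_nhdsWithin_lt hLF
  rw [Filter.tendsto_map'_iff] at hAbel
  -- identify the power series with -log on (0,1)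
  have hev : ∀ᶠ x : ℝ in nhdsWithin 1 (Set.Iio 1),
      ((fun z => ∑' n, F n * z ^ n) ∘ Complex.ofReal) x = -Complex.log (1 - x * e) := by
    filter_upwards [Ioo_mem_nhdsLT_of_mem (Set.mem_Ioc.mpr ⟨zero_lt_one, le_refl 1⟩)]
      with x hx
    have hxe : ‖(x : ℂ) * e‖ < 1 := by
      rw [norm_mul, hnorm, mul_one, Complex.norm_real]
      rw [Real.norm_eq_abs, abs_of_pos hx.1]
      exact hx.2
    have hs := Complex.hasSum_taylorSeries_neg_log hxe
    have : ∀ n : ℕ, F n * (x : ℂ) ^ n = ((x : ℂ) * e) ^ n / n := by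
      intro n
      rw [hF, mul_pow]
      ring
    simp only [Function.comp_apply]
    rw [tsum_congr this, hs.tsum_eq]
  have hAbel2 : Tendsto (fun x : ℝ => -Complex.log (1 - x * e))
      (nhdsWithin 1 (Set.Iio 1)) (nhds L) := hAbel.congr' hev
  -- continuity of -log (1 - x e) at x = 1
  have hre : 0 < ((1:ℂ) - e).re := by
    rw [he, Complex.sub_re, Complex.one_re, Complex.exp_ofReal_mul_I_re]
    have : Real.cos θ < 1 := by
      rcases lt_or_eq_of_le (Real.cos_le_one θ) with h | h
      · exact h
      · exfalso
        obtain ⟨n, hn⟩ := (Real.cos_eq_one_iff θ).mp h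
        have h1' : (0:ℝ) < n := by nlinarith
        have h2' : (n:ℝ) < 1 := by nlinarith
        have : (1:ℤ) ≤ n := by exact_mod_cast h1'
        have : (1:ℝ) ≤ (n:ℝ) := by exact_mod_cast this
        linarith
    linarith
  have hcont : Tendsto (fun x : ℝ => -Complex.log (1 - x * e))
      (nhdsWithin 1 (Set.Iio 1)) (nhds (-Complex.log (1 - e))) := by
    apply Filter.Tendsto.neg
    apply Filter.Tendsto.mono_left _ nhdsWithin_le_nhds
    apply (continuousAt_clog (Complex.mem_slitPlane_iff.mpr (Or.inl hre))).tendsto.comp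
    have : Continuous fun x : ℝ => (1:ℂ) - x * e := by continuity
    simpa using this.tendsto 1
  have hLval : L = -Complex.log (1 - e) := tendsto_nhds_unique hAbel2 hcont
  -- compute the imaginary part: arg (1 - e) = θ/2 - π/2
  have harg : Complex.arg (1 - e) = θ / 2 - π / 2 := by
    have hsin : 0 < Real.sin (θ / 2) := Real.sin_pos_of_pos_of_lt_pi (by linarith) (by linarith)
    set φ : ℝ := θ / 2 - π / 2 with hφ
    have hkey : (1 : ℂ) - e = ((2 * Real.sin (θ / 2) : ℝ) : ℂ) *
        (Complex.cos φ + Complex.sin φ * Complex.I) := by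
      have hcsub : Real.cos φ = Real.sin (θ / 2) := by
        rw [hφ, Real.cos_sub, Real.cos_pi_div_two, Real.sin_pi_div_two]; ring
      have hssub : Real.sin φ = -Real.cos (θ / 2) := by
        rw [hφ, Real.sin_sub, Real.cos_pi_div_two, Real.sin_pi_div_two]; ring
      have hc2 : Real.cos θ = 1 - 2 * Real.sin (θ / 2) ^ 2 := by
        have h2m : Real.cos θ = Real.cos (2 * (θ / 2)) := by ring_nf
        rw [h2m, Real.cos_two_mul]
        nlinarith [Real.sin_sq_add_cos_sq (θ / 2)]
      have hs2 : Real.sin θ = 2 * Real.sin (θ / 2) * Real.cos (θ / 2) := by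
        have h2m : Real.sin θ = Real.sin (2 * (θ / 2)) := by ring_nf
        rw [h2m, Real.sin_two_mul]
      apply Complex.ext
      · simp only [Complex.sub_re, Complex.one_re, he, Complex.exp_ofReal_mul_I_re,
          Complex.mul_re, Complex.ofReal_re, Complex.ofReal_im, Complex.add_re,
          Complex.add_im, Complex.mul_im, Complex.I_re, Complex.I_im,
          Complex.cos_ofReal_re, Complex.cos_ofReal_im, Complex.sin_ofReal_re,
          Complex.sin_ofReal_im]
        rw [hcsub, hc2]; ring
      · simp only [Complex.sub_im, Complex.one_im, he, Complex.exp_ofReal_mul_I_im,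
          Complex.mul_re, Complex.mul_im, Complex.ofReal_re, Complex.ofReal_im, Complex.add_re,
          Complex.add_im, Complex.I_re, Complex.I_im,
          Complex.cos_ofReal_re, Complex.cos_ofReal_im, Complex.sin_ofReal_re,
          Complex.sin_ofReal_im]
        rw [hssub, hs2]; ring
    rw [hkey, Complex.arg_real_mul _ (by positivity)]
    exact Complex.arg_cos_add_sin_mul_I ⟨by simp only [hφ]; linarith, by simp only [hφ]; linarith⟩
  -- put it together via imaginary parts
  have him : Tendsto (fun n => (∑ i ∈ range n, F i).im) atTop (nhds ((π - θ) / 2)) := by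
    have : L.im = (π - θ) / 2 := by
      rw [hLval, Complex.neg_im, Complex.log_im, harg]; ring
    exact this ▸ (Complex.continuous_im.tendsto L).comp hLF
  have hsum_eq : ∀ K : ℕ, ∑ k ∈ Finset.Icc 1 K, Real.sin (k * θ) / k =
      (∑ i ∈ range (K + 1), F i).im := by
    intro K
    rw [Complex.im_sum]
    have hIcc : Finset.Icc 1 K = (Finset.range (K + 1)).erase 0 := by
      ext n; simp [Finset.mem_Icc, Finset.mem_erase, Finset.mem_range]; omega
    rw [hIcc, Finset.sum_erase _ (by simp [hF])]
    refine Finset.sum_congr rfl fun k _ => ?_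
    simp only [hF]
    have : e ^ k = Complex.exp (((k * θ : ℝ) : ℂ) * Complex.I) := by
      rw [he, ← Complex.exp_nat_mul]
      push_cast
      ring_nf
    rw [this]
    rw [show ((k : ℕ) : ℂ) = ((k : ℝ) : ℂ) by push_cast; rfl]
    rw [Complex.div_ofReal_im, Complex.exp_ofReal_mul_I_im]
  have := him.comp (tendsto_add_atTop_nat 1)
  exact Tendsto.congr (fun K => (hsum_eq K).symm) this

lemma sin_series_tendsto' {θ : ℝ} (hlo : -(2 * π) < θ) (hhi : θ < 2 * π) (hne : θ ≠ 0) :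
    Tendsto (fun K : ℕ => ∑ k ∈ Finset.Icc 1 K, Real.sin (k * θ) / k) atTop
      (nhds (if 0 < θ then (π - θ) / 2 else (-π - θ) / 2)) := by
  rcases hne.lt_or_gt with h | h
  · rw [if_neg (not_lt.mpr h.le)]
    have ht := sin_series_tendsto (θ := -θ) (by linarith) (by linarith)
    have := ht.neg
    rw [show -((π - -θ) / 2) = (-π - θ) / 2 by ring] at this
    refine Tendsto.congr (fun K => ?_) this
    rw [← Finset.sum_neg_distrib]
    refine Finset.sum_congr rfl fun k _ => ?_
    rw [show (k : ℝ) * θ = -((k : ℝ) * -θ) by ring, Real.sin_neg]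
    ring
  · rw [if_pos h]
    exact sin_series_tendsto h hhi

theorem step_function_fourier_series (c x : ℝ) (hc : c ∈ Set.Ioo 0 π)
    (hx : x ∈ Set.Ioo (-π) π) (h1 : x ≠ c) (h2 : x ≠ -c) :
    Filter.Tendsto
      (fun K : ℕ => ∑ k ∈ Finset.Icc 1 K, (2 / (k * π)) * Real.cos (k * c) * Real.sin (k * x))
      Filter.atTop
      (nhds ((if c ≤ x then (1:ℝ) else if -c < x then 0 else -1) - x / π)) := by
  have hpi := Real.pi_pos
  obtain ⟨hc0, hcπ⟩ := hc
  obtain ⟨hx0, hxπ⟩ := hx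
  have hA := sin_series_tendsto' (θ := x + c) (by linarith) (by linarith)
    (by intro h; exact h2 (by linarith))
  have hB := sin_series_tendsto' (θ := x - c) (by linarith) (by linarith)
    (by intro h; exact h1 (by linarith))
  have hcomb := (hA.add hB).const_mul (1 / π)
  have hfun : ∀ K : ℕ, (1 / π) * ((∑ k ∈ Finset.Icc 1 K, Real.sin (k * (x + c)) / k) +
      ∑ k ∈ Finset.Icc 1 K, Real.sin (k * (x - c)) / k) =
      ∑ k ∈ Finset.Icc 1 K, (2 / (k * π)) * Real.cos (k * c) * Real.sin (k * x) := by
    intro K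
    rw [← Finset.sum_add_distrib, Finset.mul_sum]
    refine Finset.sum_congr rfl fun k hk => ?_
    have hk1 : 1 ≤ k := (Finset.mem_Icc.mp hk).1
    have hkr : (k : ℝ) ≠ 0 := Nat.cast_ne_zero.mpr (by omega)
    have e1 : Real.sin ((k : ℝ) * (x + c)) =
        Real.sin (k * x) * Real.cos (k * c) + Real.cos (k * x) * Real.sin (k * c) := by
      rw [mul_add, Real.sin_add]
    have e2 : Real.sin ((k : ℝ) * (x - c)) =
        Real.sin (k * x) * Real.cos (k * c) - Real.cos (k * x) * Real.sin (k * c) := by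
      rw [mul_sub, Real.sin_sub]
    rw [e1, e2]
    field_simp
    ring
  have hval : (1 / π) * ((if 0 < x + c then (π - (x + c)) / 2 else (-π - (x + c)) / 2) +
      (if 0 < x - c then (π - (x - c)) / 2 else (-π - (x - c)) / 2)) =
      (if c ≤ x then (1:ℝ) else if -c < x then 0 else -1) - x / π := by
    by_cases hle : c ≤ x
    · have hcx : c < x := lt_of_le_of_ne hle (Ne.symm h1)
      rw [if_pos (by linarith), if_pos (by linarith), if_pos hle]
      field_simp
      ring
    · push_neg at hle
      by_cases hge : -c < x
      · rw [if_pos (by linarith), if_neg (by intro h; linarith), if_neg (not_le.mpr hle),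
          if_pos hge]
        field_simp
        ring
      · push_neg at hge
        have hxc : x < -c := lt_of_le_of_ne hge h2
        rw [if_neg (by intro h; linarith), if_neg (by intro h; linarith),
          if_neg (not_le.mpr hle), if_neg (not_lt.mpr hxc.le)]
        field_simp
        ring
  rw [hval] at hcomb
  exact Tendsto.congr hfun hcomb
end

section
/- For x ∈ (0, 2π), the absolutely convergent bilateral sum Σ_{k∈ℤ} 1/(x + 2kπ) (interpreted as the symmetric pairing Σ_{k≥0}[1/(x+2kπ) - 1/((2π-x)+2kπ)]) has absolute value at most 2|π - x| · (1/24 + 1/(x(2π-x))). -/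
open Real

theorem bilateral_sum_bound (x : ℝ) (hx : x ∈ Set.Ioo (0:ℝ) (2 * π)) :
    |∑' k : ℕ, (1 / (x + 2 * k * π) - 1 / ((2 * π - x) + 2 * k * π))|
      ≤ 2 * |π - x| * (1 / 24 + 1 / (x * (2 * π - x))) := by
  obtain ⟨hx0, hx2⟩ := hx
  have hπ := pi_pos
  have hx2' : 0 < 2 * π - x := by linarith
  set A := 2 * |π - x| with hA
  have hA0 : 0 ≤ A := by positivity
  have ha : ∀ k : ℕ, 0 < x + 2 * (k:ℝ) * π := fun k => by positivity
  have hb : ∀ k : ℕ, 0 < (2 * π - x) + 2 * (k:ℝ) * π := fun k => by positivity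
  set f : ℕ → ℝ := fun k => 1 / (x + 2 * k * π) - 1 / ((2 * π - x) + 2 * k * π)
    with hf
  have habs : ∀ k : ℕ,
      |f k| = A / ((x + 2*(k:ℝ)*π) * ((2*π - x) + 2*(k:ℝ)*π)) := by
    intro k
    have h1 := (ha k).ne'
    have h2 := (hb k).ne'
    have he : f k = (2*(π - x)) / ((x + 2*(k:ℝ)*π) * ((2*π - x) + 2*(k:ℝ)*π)) := by
      simp only [hf]
      field_simp
      ring
    rw [he, abs_div, abs_of_pos (mul_pos (ha k) (hb k)), abs_mul, abs_two, hA]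
  -- the comparison sequence
  set c : ℕ → ℝ := fun k => (1/(4*π^2)) * (1/(k:ℝ)^2)
      + (if k = 0 then 1/(x*(2*π - x)) else 0) with hc
  have hcsum : HasSum c (1/24 + 1/(x*(2*π - x))) := by
    have h1 : HasSum (fun k : ℕ => (1/(4*π^2)) * (1/(k:ℝ)^2)) (1/24) := by
      have h := hasSum_zeta_two.mul_left (1/(4*π^2))
      have he : (1/(4*π^2)) * (π^2/6) = (1:ℝ)/24 := by
        have hπ0 : (π:ℝ) ≠ 0 := pi_ne_zero
        field_simp
        ring
      rwa [he] at h
    have h2 : HasSum (fun k : ℕ => if k = 0 then 1/(x*(2*π - x)) else 0)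
        (1/(x*(2*π - x))) := hasSum_ite_eq 0 _
    exact h1.add h2
  have hcnn : ∀ k, 0 ≤ c k := by
    intro k
    have : 0 ≤ (1/(x*(2*π - x)) : ℝ) := by positivity
    simp only [hc]
    split <;> positivity
  have hbound : ∀ k : ℕ, |f k| ≤ A * c k := by
    intro k
    rw [habs k]
    cases k with
    | zero =>
      simp only [hc, Nat.cast_zero, if_pos rfl]
      rw [div_eq_mul_inv]
      refine le_of_eq ?_
      norm_num
    | succ n =>
      have hk1 : (1:ℝ) ≤ ((n:ℝ)+1) := by
        have := Nat.cast_nonneg (α := ℝ) n; linarith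
      have hkpos : (0:ℝ) < (n:ℝ)+1 := by positivity
      simp only [hc, Nat.succ_ne_zero, if_false, add_zero, Nat.cast_succ]
      have hD : 4*π^2*((n:ℝ)+1)^2 ≤
          (x + 2*((n:ℝ)+1)*π) * ((2*π - x) + 2*((n:ℝ)+1)*π) := by
        have h1 : 2*((n:ℝ)+1)*π ≤ x + 2*((n:ℝ)+1)*π := by linarith
        have h2 : 2*((n:ℝ)+1)*π ≤ (2*π - x) + 2*((n:ℝ)+1)*π := by linarith
        have h3 : (0:ℝ) < 2*((n:ℝ)+1)*π := by positivity
        have h4 : (0:ℝ) ≤ x + 2*((n:ℝ)+1)*π := by positivity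
        nlinarith [mul_le_mul h1 h2 (le_of_lt h3) h4]
      calc A / ((x + 2*((n:ℝ)+1)*π) * ((2*π - x) + 2*((n:ℝ)+1)*π))
          ≤ A / (4*π^2*((n:ℝ)+1)^2) := by
            apply div_le_div_of_nonneg_left hA0 (by positivity) hD
        _ = A * (1/(4*π^2) * (1/((n:ℝ)+1)^2)) := by field_simp
  have hgsum : Summable (fun k => A * c k) := (hcsum.mul_left A).summable
  have hfabs : Summable (fun k => |f k|) :=
    Summable.of_nonneg_of_le (fun k => abs_nonneg _) hbound hgsum
  have hfabs' : Summable (fun k => ‖f k‖) := by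
    simpa only [Real.norm_eq_abs] using hfabs
  calc |∑' k : ℕ, f k| ≤ ∑' k : ℕ, |f k| := by
        simpa only [Real.norm_eq_abs] using norm_tsum_le_tsum_norm hfabs'
    _ ≤ ∑' k : ℕ, A * c k := Summable.tsum_le_tsum hbound hfabs hgsum
    _ = A * (1/24 + 1/(x*(2*π - x))) := (hcsum.mul_left A).tsum_eq
end

section
/- Let X be a discrete random variable taking finitely many values 0 < X_1 < ... < X_M < π with P(X = X_m) = p_m, and let F_X be its CDF. Let σ be a p-th order spectral filter (σ even, σ(0)=1, σ vanishing outside [-1,1], σ ∈ C^{p-1}) with p ≥ 2. Define A_k = (2/π)Σ_m p_m cos(kX_m) and F^σ(x) = (A_0/2)x + Σ_{k=1}^K (A_k σ(k/K)/k) sin(kx). Then for every x ∈ (0,π) with x ∉ {X_1,...,X_M}, F^σ(x) - F_X(x) = Σ_{m: x < X_m} (p_m/(2π))(K_1(x + X_m) + K_1(x - X_m + 2π)) + Σ_{m: X_m < x} (p_m/(2π))(K_1(x - X_m) + K_1(x + X_m)), where K_1(t) = t - π + Σ_{k=1}^K (2/k)σ(k/K) sin(kt) for t ∈ (0,2π),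 extended 2π-periodically. -/
open Real

open Classical in
theorem cos_cdf_error_decomposition (M : ℕ) (X p : Fin M → ℝ)
    (hmono : StrictMono X) (hX : ∀ m, 0 < X m ∧ X m < π)
    (hp : ∀ m, 0 ≤ p m) (hpsum : ∑ m, p m = 1)
    (σ : ℝ → ℝ) (pord : ℕ) (hpord : 2 ≤ pord)
    (heven : ∀ η, σ (-η) = σ η) (h0 : σ 0 = 1)
    (hsupp : ∀ η, 1 < |η| → σ η = 0) (hsmooth : ContDiff ℝ (pord - 1) σ)
    (K : ℕ) (hK : 1 ≤ K)
    (A : ℕ → ℝ) (hA : ∀ k, A k = (2 / π) * ∑ m, p m * Real.cos (k * X m))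
    (Fσ : ℝ → ℝ)
    (hFσ : ∀ x, Fσ x = (A 0 / 2) * x +
      ∑ k ∈ Finset.Icc 1 K, (A k * σ (k / K) / k) * Real.sin (k * x))
    (FX : ℝ → ℝ)
    (hFX : ∀ x, FX x = ∑ m ∈ Finset.univ.filter (fun m => X m ≤ x), p m)
    (K1 : ℝ → ℝ)
    (hK1 : ∀ t, K1 t = t - π + ∑ k ∈ Finset.Icc 1 K, (2 / k) * σ (k / K) * Real.sin (k * t))
    (x : ℝ) (hx : x ∈ Set.Ioo (0:ℝ) π) (hne : ∀ m, x ≠ X m) :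
    Fσ x - FX x
      = (∑ m ∈ Finset.univ.filter (fun m => x < X m),
          (p m / (2 * π)) * (K1 (x + X m) + K1 (x - X m + 2 * π)))
        + ∑ m ∈ Finset.univ.filter (fun m => X m < x),
            (p m / (2 * π)) * (K1 (x - X m) + K1 (x + X m)) := by
  have hπ : π ≠ 0 := Real.pi_ne_zero
  set g : Fin M → ℝ := fun m => p m * (x / π)
      + ∑ k ∈ Finset.Icc 1 K, (2 / (π * (k:ℝ))) * σ (k / K) * p m *
          (Real.cos (k * X m) * Real.sin (k * x)) with hg
  have trig : ∀ (k : ℕ) (X0 : ℝ),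
      Real.sin ((k:ℝ) * (x - X0)) + Real.sin ((k:ℝ) * (x + X0))
        = 2 * Real.sin (k * x) * Real.cos (k * X0) := by
    intro k X0
    rw [mul_sub, mul_add, Real.sin_sub, Real.sin_add]; ring
  have trig2 : ∀ (k : ℕ) (X0 : ℝ),
      Real.sin ((k:ℝ) * (x - X0 + 2 * π)) = Real.sin ((k:ℝ) * (x - X0)) := by
    intro k X0
    have h : (k:ℝ) * (x - X0 + 2 * π) = (k:ℝ) * (x - X0) + k * (2 * π) := by ring
    rw [h, Real.sin_add_nat_mul_two_pi]
  have hsum : ∀ m : Fin M,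
      (∑ k ∈ Finset.Icc 1 K, (2 / (k:ℝ)) * σ (k / K) * Real.sin (k * (x - X m)))
        + ∑ k ∈ Finset.Icc 1 K, (2 / (k:ℝ)) * σ (k / K) * Real.sin (k * (x + X m))
      = ∑ k ∈ Finset.Icc 1 K, (2 / (k:ℝ)) * σ (k / K) *
          (2 * Real.sin (k * x) * Real.cos (k * X m)) := by
    intro m
    rw [← Finset.sum_add_distrib]
    refine Finset.sum_congr rfl fun k _ => ?_
    rw [← trig k (X m)]; ring
  have hdist : ∀ m : Fin M,
      p m / (2 * π) * ∑ k ∈ Finset.Icc 1 K, (2 / (k:ℝ)) * σ (k / K) *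
          (2 * Real.sin (k * x) * Real.cos (k * X m))
      = ∑ k ∈ Finset.Icc 1 K, (2 / (π * (k:ℝ))) * σ (k / K) * p m *
          (Real.cos (k * X m) * Real.sin (k * x)) := by
    intro m
    rw [Finset.mul_sum]
    refine Finset.sum_congr rfl fun k _ => ?_
    ring
  have hR2 : ∀ m : Fin M,
      p m / (2 * π) * (K1 (x - X m) + K1 (x + X m)) = g m - p m := by
    intro m
    rw [hK1, hK1, hg]
    have hb : (x - X m - π + ∑ k ∈ Finset.Icc 1 K, (2 / (k:ℝ)) * σ (k / K) *
            Real.sin (k * (x - X m)))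
        + (x + X m - π + ∑ k ∈ Finset.Icc 1 K, (2 / (k:ℝ)) * σ (k / K) *
            Real.sin (k * (x + X m)))
        = (2 * x - 2 * π) + ∑ k ∈ Finset.Icc 1 K, (2 / (k:ℝ)) * σ (k / K) *
            (2 * Real.sin (k * x) * Real.cos (k * X m)) := by
      have := hsum m; linarith
    rw [mul_comm (p m / (2 * π)), ← mul_comm (p m / (2 * π)), hb, mul_add, hdist m]
    have h3 : p m / (2 * π) * (2 * x - 2 * π) = p m * (x / π) - p m := by
      field_simp
    rw [h3]; ring
  have hR1 : ∀ m : Fin M,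
      p m / (2 * π) * (K1 (x + X m) + K1 (x - X m + 2 * π)) = g m := by
    intro m
    rw [hK1, hK1, hg]
    have hper : ∑ k ∈ Finset.Icc 1 K, (2 / (k:ℝ)) * σ (k / K) *
            Real.sin (k * (x - X m + 2 * π))
        = ∑ k ∈ Finset.Icc 1 K, (2 / (k:ℝ)) * σ (k / K) * Real.sin (k * (x - X m)) :=
      Finset.sum_congr rfl fun k _ => by rw [trig2 k (X m)]
    have hb : (x + X m - π + ∑ k ∈ Finset.Icc 1 K, (2 / (k:ℝ)) * σ (k / K) *
            Real.sin (k * (x + X m)))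
        + (x - X m + 2 * π - π + ∑ k ∈ Finset.Icc 1 K, (2 / (k:ℝ)) * σ (k / K) *
            Real.sin (k * (x - X m + 2 * π)))
        = (2 * x) + ∑ k ∈ Finset.Icc 1 K, (2 / (k:ℝ)) * σ (k / K) *
            (2 * Real.sin (k * x) * Real.cos (k * X m)) := by
      have := hsum m; linarith [hper]
    rw [hb, mul_add, hdist m]
    have h4 : p m / (2 * π) * (2 * x) = p m * (x / π) := by
      field_simp
    rw [h4]
  have hFσ' : Fσ x = ∑ m, g m := by
    rw [hFσ]
    have h0' : (A 0 / 2) * x = ∑ m, p m * (x / π) := by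
      rw [hA 0]
      have e1 : ∑ m, p m * Real.cos (((0:ℕ):ℝ) * X m) = 1 := by
        simp [hpsum]
      rw [e1, ← Finset.sum_mul, hpsum]
      ring
    have e : ∀ k ∈ Finset.Icc 1 K, (A k * σ (k / K) / k) * Real.sin (k * x)
        = ∑ m, (2 / (π * (k:ℝ))) * σ (k / K) * p m *
            (Real.cos (k * X m) * Real.sin (k * x)) := by
      intro k _
      rw [hA k, Finset.mul_sum, Finset.sum_mul, Finset.sum_div, Finset.sum_mul]
      exact Finset.sum_congr rfl fun m _ => by ring
    rw [Finset.sum_congr rfl e, Finset.sum_comm, h0', ← Finset.sum_add_distrib]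
  have hFX' : FX x = ∑ m ∈ Finset.univ.filter (fun m => X m < x), p m := by
    rw [hFX]
    apply Finset.sum_congr _ fun _ _ => rfl
    apply Finset.filter_congr
    intro m _
    constructor
    · intro h; exact lt_of_le_of_ne h fun e => hne m e.symm
    · intro h; exact h.le
  have hsplit : ∑ m, g m
      = ∑ m ∈ Finset.univ.filter (fun m => x < X m), g m
        + ∑ m ∈ Finset.univ.filter (fun m => X m < x), g m := by
    rw [← Finset.sum_filter_add_sum_filter_not Finset.univ (fun m => x < X m) g]
    congr 1
    apply Finset.sum_congr _ fun _ _ => rfl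
    apply Finset.filter_congr
    intro m _
    constructor
    · intro h; exact lt_of_le_of_ne (not_lt.1 h) fun e => hne m e.symm
    · intro h; exact not_lt.2 h.le
  have hRHS1 : ∑ m ∈ Finset.univ.filter (fun m => x < X m),
      (p m / (2 * π)) * (K1 (x + X m) + K1 (x - X m + 2 * π))
      = ∑ m ∈ Finset.univ.filter (fun m => x < X m), g m :=
    Finset.sum_congr rfl fun m _ => hR1 m
  have hRHS2 : ∑ m ∈ Finset.univ.filter (fun m => X m < x),
      (p m / (2 * π)) * (K1 (x - X m) + K1 (x + X m))
      = ∑ m ∈ Finset.univ.filter (fun m => X m < x), (g m - p m) :=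
    Finset.sum_congr rfl fun m _ => hR2 m
  rw [hFσ', hFX', hRHS1, hRHS2, Finset.sum_sub_distrib, hsplit]
  ring
end

section
/- Let σ be the Lanczos filter σ(η) = sin(πη)/(πη). Then for each fixed x ∈ (0, 2π), there exists a constant C(x) such that for all K > max(2π/x, 2π/(2π - x)), |K_0(x)| ≤ (38/(3πK)) + 38π/(3Kx²) + 38π/(3K(x - 2π)²), where K_0(x) = 1 + 2Σ_{k=1}^K σ(k/K) cos(kx). -/
open Real

private lemma one_sub_cos_le_half_sq (v : ℝ) : 1 - Real.cos v ≤ v ^ 2 / 2 := by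
  have h : Real.sin (v / 2) ^ 2 = 1 / 2 - Real.cos v / 2 := by
    simpa [show 2 * (v / 2) = v by ring] using Real.sin_sq_eq_half_sub (v / 2)
  have h2 : Real.sin (v / 2) ^ 2 ≤ (v / 2) ^ 2 := Real.sin_sq_le_sq
  nlinarith

private lemma cos_second_diff (u v : ℝ) :
    |2 * Real.cos u - Real.cos (u + v) - Real.cos (u - v)| ≤ v ^ 2 := by
  have h : 2 * Real.cos u - Real.cos (u + v) - Real.cos (u - v)
      = 2 * Real.cos u * (1 - Real.cos v) := by
    rw [Real.cos_add, Real.cos_sub]; ring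
  rw [h, abs_mul]
  have h1 : |2 * Real.cos u| ≤ 2 := by
    rw [abs_mul, abs_two]
    nlinarith [Real.abs_cos_le_one u, abs_nonneg (Real.cos u)]
  have h2 : |1 - Real.cos v| ≤ v ^ 2 / 2 := by
    rw [abs_of_nonneg (by nlinarith [Real.cos_le_one v])]
    exact one_sub_cos_le_half_sq v
  nlinarith [abs_nonneg (2 * Real.cos u), abs_nonneg (1 - Real.cos v)]

private lemma sbp (x : ℝ) (w : ℕ → ℝ) (N : ℕ) (hN : 1 ≤ N) :
    (2 - 2 * Real.cos x) * ∑ k ∈ Finset.range (N + 1), w k * Real.cos (k * x)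
      = (∑ k ∈ Finset.range (N + 1),
          (2 * w k - w (k + 1) - (if k = 0 then 0 else w (k - 1))
            - (if k = 1 then w 0 else 0)) * Real.cos (k * x))
        + w (N + 1) * Real.cos (N * x) - w N * Real.cos ((N + 1) * x) := by
  induction N, hN using Nat.le_induction with
  | base =>
      have h2 : Real.cos (2 * x) = 2 * Real.cos x ^ 2 - 1 := Real.cos_two_mul x
      simp [Finset.sum_range_succ]
      norm_num
      linear_combination w 1 * h2
  | succ n hn ih =>
      conv_lhs => rw [Finset.sum_range_succ]
      conv_rhs => rw [Finset.sum_range_succ]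
      have e0 : ¬ (n + 1 = 0) := by omega
      have e1 : ¬ (n + 1 = 1) := by omega
      rw [if_neg e0, if_neg e1, Nat.add_sub_cancel]
      have key : Real.cos (((n:ℝ) + 1 + 1) * x) + Real.cos ((n:ℝ) * x)
          = 2 * Real.cos (((n:ℝ) + 1) * x) * Real.cos x := by
        have h1 := Real.cos_add (((n:ℝ) + 1) * x) x
        have h2 := Real.cos_sub (((n:ℝ) + 1) * x) x
        have a1 : ((n:ℝ) + 1) * x + x = ((n:ℝ) + 1 + 1) * x := by ring
        have a2 : ((n:ℝ) + 1) * x - x = (n:ℝ) * x := by ring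
        rw [a1] at h1; rw [a2] at h2; linarith
      push_cast at ih ⊢
      linear_combination ih + w (n + 1) * key

private lemma cos_int_eval (c : ℝ) (hc : c ≠ 0) :
    (∫ s in (0:ℝ)..1, Real.cos (c * s)) = Real.sin c / c := by
  rw [intervalIntegral.integral_comp_mul_left Real.cos hc]
  simp [integral_cos, smul_eq_mul, inv_mul_eq_div]

private lemma master_bound (q : ℝ) (p : ℝ) :
    |∫ s in (0:ℝ)..1,
        (2 * Real.cos (p * s) - Real.cos (p * s + q * s) - Real.cos (p * s - q * s))|
      ≤ q ^ 2 / 3 := by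
  have hc1 : Continuous fun s : ℝ =>
      2 * Real.cos (p * s) - Real.cos (p * s + q * s) - Real.cos (p * s - q * s) := by
    fun_prop
  have h1 := intervalIntegral.abs_integral_le_integral_abs (μ := MeasureTheory.volume)
      (f := fun s : ℝ => 2 * Real.cos (p * s) - Real.cos (p * s + q * s) - Real.cos (p * s - q * s))
      (a := 0) (b := 1) (by norm_num)
  have h2 : (∫ s in (0:ℝ)..1,
        |2 * Real.cos (p * s) - Real.cos (p * s + q * s) - Real.cos (p * s - q * s)|)
      ≤ ∫ s in (0:ℝ)..1, q ^ 2 * s ^ 2 := by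
    apply intervalIntegral.integral_mono_on (by norm_num)
      (hc1.abs.intervalIntegrable _ _)
      ((by fun_prop : Continuous fun s : ℝ => q ^ 2 * s ^ 2).intervalIntegrable _ _)
    intro s _
    calc |2 * Real.cos (p * s) - Real.cos (p * s + q * s) - Real.cos (p * s - q * s)|
        ≤ (q * s) ^ 2 := cos_second_diff (p * s) (q * s)
      _ = q ^ 2 * s ^ 2 := by ring
  have h3 : (∫ s in (0:ℝ)..1, q ^ 2 * s ^ 2) = q ^ 2 / 3 := by
    rw [intervalIntegral.integral_const_mul, integral_pow]
    ring_nf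
  calc |∫ s in (0:ℝ)..1,
        (2 * Real.cos (p * s) - Real.cos (p * s + q * s) - Real.cos (p * s - q * s))|
      ≤ ∫ s in (0:ℝ)..1,
        |2 * Real.cos (p * s) - Real.cos (p * s + q * s) - Real.cos (p * s - q * s)| := h1
    _ ≤ ∫ s in (0:ℝ)..1, q ^ 2 * s ^ 2 := h2
    _ = q ^ 2 / 3 := h3

private lemma jordan_low (x : ℝ) (hx0 : 0 < x) (hxpi : x ≤ π) :
    4 * x^2 / π^2 ≤ 2 - 2 * Real.cos x := by
  have hπ := Real.pi_pos
  have hs2 : 2 - 2 * Real.cos x = 4 * Real.sin (x/2)^2 := by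
    have h := Real.sin_sq_eq_half_sub (x/2)
    rw [show 2*(x/2) = x by ring] at h
    linarith
  have habs : |x/2| ≤ π/2 := by rw [abs_of_nonneg (by linarith)]; linarith
  have hj := Real.mul_abs_le_abs_sin habs
  rw [abs_of_nonneg (by linarith : (0:ℝ) ≤ x/2)] at hj
  have hj2 : (2/π*(x/2))^2 ≤ Real.sin (x/2)^2 := by
    have := pow_le_pow_left₀ (by positivity) hj 2
    rwa [sq_abs] at this
  have he : (4:ℝ) * x^2/π^2 = 4*((2/π*(x/2))^2) := by field_simp
  rw [hs2, he]
  linarith [hj2]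

private lemma jordan_high (x : ℝ) (hx2 : x < 2*π) (hxpi : π ≤ x) :
    4 * (x - 2*π)^2 / π^2 ≤ 2 - 2 * Real.cos x := by
  have hπ := Real.pi_pos
  have hs2 : 2 - 2 * Real.cos x = 4 * Real.sin (x/2)^2 := by
    have h := Real.sin_sq_eq_half_sub (x/2)
    rw [show 2*(x/2) = x by ring] at h
    linarith
  have hrefl : Real.sin (x/2) = Real.sin (π - x/2) := (Real.sin_pi_sub (x/2)).symm
  have habs : |π - x/2| ≤ π/2 := by rw [abs_of_nonneg (by linarith)]; linarith
  have hj := Real.mul_abs_le_abs_sin habs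
  rw [abs_of_nonneg (by linarith : (0:ℝ) ≤ π - x/2)] at hj
  have h0 : (0:ℝ) ≤ 2/π*(π - x/2) := by
    have h1 : (0:ℝ) ≤ π - x/2 := by linarith
    positivity
  have hj2 : (2/π*(π - x/2))^2 ≤ Real.sin (π - x/2)^2 := by
    have := pow_le_pow_left₀ h0 hj 2
    rwa [sq_abs] at this
  have he : (4:ℝ) * (x - 2*π)^2/π^2 = 4*((2/π*(π - x/2))^2) := by field_simp; ring
  rw [hs2, hrefl, he]
  linarith [hj2]

private lemma numeric_bound (K : ℕ) (hK2 : 2 ≤ K) :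
    2*π^2/(3*(K:ℝ)) + 2/((K:ℝ)-1) ≤ 152/(3*π*(K:ℝ)) := by
  have hπ := Real.pi_pos
  have hKR : (0:ℝ) < (K:ℝ) := by positivity
  have hKR2 : (2:ℝ) ≤ (K:ℝ) := by exact_mod_cast hK2
  have e1 : 2/((K:ℝ)-1) ≤ 4/(K:ℝ) := by
    rw [div_le_div_iff₀ (by linarith) hKR]
    linarith
  have hp3 : π^3 < (3.15:ℝ)^3 :=
    pow_lt_pow_left₀ Real.pi_lt_d2 Real.pi_pos.le (by norm_num)
  have hnum : 2*π^3 + 12*π ≤ 152 := by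
    nlinarith [hp3, Real.pi_lt_d2]
  have hKsq : (0:ℝ) < (K:ℝ)^2 := by positivity
  have e2 : 2*π^2/(3*(K:ℝ)) + 4/(K:ℝ) ≤ 152/(3*π*(K:ℝ)) := by
    rw [div_add_div _ _ (by positivity) (by positivity),
      div_le_div_iff₀ (by positivity) (by positivity)]
    nlinarith [mul_le_mul_of_nonneg_right hnum (le_of_lt hKsq)]
  linarith

set_option maxHeartbeats 1000000 in
theorem lanczos_kernel_bound (x : ℝ) (hx : x ∈ Set.Ioo (0:ℝ) (2 * π)) (K : ℕ)
    (hK : (K : ℝ) > max (2 * π / x) (2 * π / (2 * π - x))) :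
    |1 + 2 * ∑ k ∈ Finset.Icc 1 K, (Real.sin (π * (k / K)) / (π * (k / K))) * Real.cos (k * x)|
      ≤ 38 / (3 * π * K) + 38 * π / (3 * K * x ^ 2) + 38 * π / (3 * K * (x - 2 * π) ^ 2) := by
  obtain ⟨hx0, hx2⟩ := hx
  have hπ := Real.pi_pos
  have hKx : (2 * π / x) < (K:ℝ) := lt_of_le_of_lt (le_max_left _ _) hK
  have h1x : (1:ℝ) < 2 * π / x := (one_lt_div hx0).mpr (by linarith)
  have hK1R : (1:ℝ) < (K:ℝ) := lt_trans h1x hKx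
  have hK2 : 2 ≤ K := by exact_mod_cast Nat.one_lt_cast.mp hK1R
  have hKR : (0:ℝ) < (K:ℝ) := by positivity
  have hKne : (K:ℝ) ≠ 0 := ne_of_gt hKR
  set w : ℕ → ℝ := fun k => if k = 0 then 1
      else if k ≤ K then 2 * (Real.sin (π * ((k:ℝ) / K)) / (π * ((k:ℝ) / K))) else 0 with hw
  have hsigK : Real.sin (π * ((K:ℝ) / K)) / (π * ((K:ℝ) / K)) = 0 := by
    rw [div_self hKne, mul_one, Real.sin_pi, zero_div]
  have hwK : w K = 0 := by
    simp only [hw, if_neg (by omega : ¬ K = 0), if_pos (le_refl K), hsigK, mul_zero]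
  have hwK1 : w (K+1) = 0 := by
    simp only [hw, if_neg (by omega : ¬ K + 1 = 0), if_neg (by omega : ¬ K + 1 ≤ K), ite_self]
  have hwK2 : w (K+1+1) = 0 := by
    simp only [hw, if_neg (by omega : ¬ K + 1 + 1 = 0), if_neg (by omega : ¬ K + 1 + 1 ≤ K),
      ite_self]
  have hw0 : w 0 = 1 := by simp only [hw, if_pos rfl]
  -- identification of the kernel sum
  have hT : (∑ k ∈ Finset.range (K+1+1), w k * Real.cos ((k:ℝ) * x))
      = 1 + 2 * ∑ k ∈ Finset.Icc 1 K,
          (Real.sin (π * ((k:ℝ) / K)) / (π * ((k:ℝ) / K))) * Real.cos ((k:ℝ) * x) := by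
    rw [Finset.sum_range_succ, hwK1, zero_mul, add_zero, Finset.sum_range_succ']
    simp only [hw0, Nat.cast_zero, zero_mul, Real.cos_zero, mul_one, one_mul]
    rw [show Finset.Icc 1 K = Finset.Ico 1 (K+1) by rw [Finset.Ico_add_one_right_eq_Icc],
      Finset.sum_Ico_eq_sum_range]
    simp only [Nat.add_sub_cancel]
    rw [add_comm, Finset.mul_sum]
    congr 1
    apply Finset.sum_congr rfl
    intro i hi
    have hiK : i + 1 ≤ K := by
      have := Finset.mem_range.mp hi; omega
    simp only [hw, Nat.add_comm 1 i, if_neg (by omega : ¬ i + 1 = 0), if_pos hiK]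
    ring
  -- summation by parts
  have hid := sbp x w (K+1) (by omega)
  rw [hwK2, hwK1, zero_mul, zero_mul, add_zero, sub_zero] at hid
  -- integral representation of the coefficients
  have hwJ : ∀ j : ℕ, 1 ≤ j → j ≤ K →
      w j = 2 * ∫ s in (0:ℝ)..1, Real.cos ((π * (j:ℝ) / K) * s) := by
    intro j h1 h2
    have hjR : (0:ℝ) < (j:ℝ) := by exact_mod_cast h1
    have hc : (π * (j:ℝ) / K) ≠ 0 :=
      ne_of_gt (div_pos (mul_pos Real.pi_pos hjR) hKR)
    rw [cos_int_eval _ hc]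
    simp only [hw, if_neg (by omega : ¬ j = 0), if_pos h2]
    rw [show π * ((j:ℝ) / K) = π * (j:ℝ) / K by ring]
  have hJ0 : (∫ s in (0:ℝ)..1, Real.cos ((π * ((0:ℕ):ℝ) / K) * s)) = 1 := by
    simp
  -- second differences in integral form, interior indices
  have hdval : ∀ k : ℕ, 1 ≤ k → k < K →
      2 * w k - w (k + 1) - (if k = 0 then 0 else w (k - 1)) - (if k = 1 then w 0 else 0)
        = 2 * ∫ s in (0:ℝ)..1,
            (2 * Real.cos ((π * (k:ℝ) / K) * s)
              - Real.cos ((π * (k:ℝ) / K) * s + (π / (K:ℝ)) * s)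
              - Real.cos ((π * (k:ℝ) / K) * s - (π / (K:ℝ)) * s)) := by
    intro k hk1 hkK
    have hint1 : IntervalIntegrable (fun s : ℝ => Real.cos ((π * (k:ℝ) / K) * s))
        MeasureTheory.volume 0 1 :=
      (by fun_prop : Continuous fun s : ℝ =>
        Real.cos ((π * (k:ℝ) / K) * s)).intervalIntegrable _ _
    have hint2 : IntervalIntegrable
        (fun s : ℝ => Real.cos ((π * (k:ℝ) / K) * s + (π / (K:ℝ)) * s))
        MeasureTheory.volume 0 1 :=
      (by fun_prop : Continuous fun s : ℝ =>
        Real.cos ((π * (k:ℝ) / K) * s + (π / (K:ℝ)) * s)).intervalIntegrable _ _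
    have hint3 : IntervalIntegrable
        (fun s : ℝ => Real.cos ((π * (k:ℝ) / K) * s - (π / (K:ℝ)) * s))
        MeasureTheory.volume 0 1 :=
      (by fun_prop : Continuous fun s : ℝ =>
        Real.cos ((π * (k:ℝ) / K) * s - (π / (K:ℝ)) * s)).intervalIntegrable _ _
    have e2 : (∫ s in (0:ℝ)..1, Real.cos ((π * (k:ℝ) / K) * s + (π / (K:ℝ)) * s))
        = ∫ s in (0:ℝ)..1, Real.cos ((π * ((k+1:ℕ):ℝ) / K) * s) := by
      have hfun : (fun s : ℝ => Real.cos ((π * (k:ℝ) / K) * s + (π / (K:ℝ)) * s))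
          = (fun s : ℝ => Real.cos ((π * ((k+1:ℕ):ℝ) / K) * s)) := by
        funext s
        congr 1
        push_cast
        ring
      rw [hfun]
    have e3 : (∫ s in (0:ℝ)..1, Real.cos ((π * (k:ℝ) / K) * s - (π / (K:ℝ)) * s))
        = ∫ s in (0:ℝ)..1, Real.cos ((π * ((k-1:ℕ):ℝ) / K) * s) := by
      have hfun : (fun s : ℝ => Real.cos ((π * (k:ℝ) / K) * s - (π / (K:ℝ)) * s))
          = (fun s : ℝ => Real.cos ((π * ((k-1:ℕ):ℝ) / K) * s)) := by
        funext s
        congr 1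
        rw [Nat.cast_sub hk1, Nat.cast_one]
        ring
      rw [hfun]
    rw [intervalIntegral.integral_sub ((hint1.const_mul 2).sub hint2) hint3,
      intervalIntegral.integral_sub (hint1.const_mul 2) hint2,
      intervalIntegral.integral_const_mul, e2, e3]
    rcases eq_or_lt_of_le hk1 with h1 | h2
    · -- k = 1
      subst h1
      simp only [Nat.sub_self]
      simp only [if_true, ite_true]
      rw [if_neg (by omega : ¬ (1:ℕ) = 0), hw0, hJ0,
        hwJ 1 le_rfl (by omega), hwJ (1+1) (by omega) (by omega)]
      ring
    · -- 2 ≤ k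
      rw [if_neg (by omega : ¬ k = 0), if_neg (by omega : ¬ k = 1),
        hwJ k hk1 (by omega), hwJ (k+1) (by omega) (by omega), hwJ (k-1) (by omega) (by omega)]
      ring
  -- the bound function
  set g : ℕ → ℝ := fun k => if k < K then 2*π^2/(3*(K:ℝ)^2)
      else if k = K then 2/((K:ℝ)-1) else 0 with hg
  have hq2 : ((π/(K:ℝ))^2)/3 = π^2/(3*(K:ℝ)^2) := by
    rw [div_pow]; ring
  -- pointwise bound on the coefficients of the transformed sum
  have hbound : ∀ k ∈ Finset.range (K+1+1),
      |(2 * w k - w (k + 1) - (if k = 0 then 0 else w (k - 1))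
          - (if k = 1 then w 0 else 0)) * Real.cos ((k:ℝ) * x)| ≤ g k := by
    intro k hk
    have hcle : |(2 * w k - w (k + 1) - (if k = 0 then 0 else w (k - 1))
          - (if k = 1 then w 0 else 0)) * Real.cos ((k:ℝ) * x)|
        ≤ |2 * w k - w (k + 1) - (if k = 0 then 0 else w (k - 1))
          - (if k = 1 then w 0 else 0)| := by
      rw [abs_mul]
      exact mul_le_of_le_one_right (abs_nonneg _) (Real.abs_cos_le_one _)
    refine le_trans hcle ?_
    by_cases hk0 : k = 0
    · subst hk0
      rw [if_pos rfl, if_neg (by omega : ¬ (0:ℕ) = 1)]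
      have i1 : IntervalIntegrable (fun s : ℝ => Real.cos ((0:ℝ) * s))
          MeasureTheory.volume 0 1 :=
        (by fun_prop : Continuous fun s : ℝ => Real.cos ((0:ℝ) * s)).intervalIntegrable _ _
      have i2 : IntervalIntegrable (fun s : ℝ => Real.cos ((0:ℝ) * s + (π / (K:ℝ)) * s))
          MeasureTheory.volume 0 1 :=
        (by fun_prop : Continuous fun s : ℝ =>
          Real.cos ((0:ℝ) * s + (π / (K:ℝ)) * s)).intervalIntegrable _ _
      have i3 : IntervalIntegrable (fun s : ℝ => Real.cos ((0:ℝ) * s - (π / (K:ℝ)) * s))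
          MeasureTheory.volume 0 1 :=
        (by fun_prop : Continuous fun s : ℝ =>
          Real.cos ((0:ℝ) * s - (π / (K:ℝ)) * s)).intervalIntegrable _ _
      have hd0 : 2 * w 0 - w (0 + 1) - 0 - 0
          = ∫ s in (0:ℝ)..1, (2 * Real.cos ((0:ℝ) * s)
              - Real.cos ((0:ℝ) * s + (π / (K:ℝ)) * s)
              - Real.cos ((0:ℝ) * s - (π / (K:ℝ)) * s)) := by
        rw [intervalIntegral.integral_sub ((i1.const_mul 2).sub i2) i3,
          intervalIntegral.integral_sub (i1.const_mul 2) i2,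
          intervalIntegral.integral_const_mul]
        have ea : (∫ s in (0:ℝ)..1, Real.cos ((0:ℝ) * s)) = 1 := by simp
        have eb : (∫ s in (0:ℝ)..1, Real.cos ((0:ℝ) * s + (π / (K:ℝ)) * s))
            = ∫ s in (0:ℝ)..1, Real.cos ((π * ((0+1:ℕ):ℝ) / K) * s) := by
          have hfun : (fun s : ℝ => Real.cos ((0:ℝ) * s + (π / (K:ℝ)) * s))
              = (fun s : ℝ => Real.cos ((π * ((0+1:ℕ):ℝ) / K) * s)) := by
            funext s
            congr 1
            push_cast
            ring
          rw [hfun]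
        have ec : (∫ s in (0:ℝ)..1, Real.cos ((0:ℝ) * s - (π / (K:ℝ)) * s))
            = ∫ s in (0:ℝ)..1, Real.cos ((π * ((0+1:ℕ):ℝ) / K) * s) := by
          have hfun : (fun s : ℝ => Real.cos ((0:ℝ) * s - (π / (K:ℝ)) * s))
              = (fun s : ℝ => Real.cos ((π * ((0+1:ℕ):ℝ) / K) * s)) := by
            funext s
            rw [show (0:ℝ) * s - (π / (K:ℝ)) * s = -((π * ((0+1:ℕ):ℝ) / K) * s) by
              push_cast; ring, Real.cos_neg]
          rw [hfun]
        rw [ea, eb, ec, hw0, hwJ (0+1) (by omega) (by omega)]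
        ring
      rw [hd0]
      refine le_trans (master_bound (π/(K:ℝ)) 0) ?_
      rw [hq2]
      simp only [hg, if_pos (by omega : 0 < K)]
      have hpq : (0:ℝ) < π^2/(3*(K:ℝ)^2) := by positivity
      calc π^2/(3*(K:ℝ)^2) ≤ 2*(π^2/(3*(K:ℝ)^2)) := by linarith
        _ = 2*π^2/(3*(K:ℝ)^2) := by ring
    · by_cases hkK : k < K
      · have hk1 : 1 ≤ k := by omega
        rw [hdval k hk1 hkK, abs_mul, abs_two]
        refine le_trans (mul_le_mul_of_nonneg_left
          (master_bound (π/(K:ℝ)) (π * (k:ℝ) / K)) (by norm_num)) ?_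
        rw [hq2]
        simp only [hg, if_pos hkK]
        exact le_of_eq (by ring)
      · by_cases hkKe : k = K
        · have hkKe' : K = k := hkKe.symm
          subst hkKe'
          rw [hwK, hwK1, if_neg (by omega : ¬ K = 0), if_neg (by omega : ¬ K = 1)]
          have hcast : ((K-1:ℕ):ℝ) = (K:ℝ) - 1 := by
            rw [Nat.cast_sub (by omega : 1 ≤ K), Nat.cast_one]
          have hwKm : w (K-1) = 2 * (Real.sin (π * (((K:ℝ)-1) / K)) / (π * (((K:ℝ)-1) / K))) := by
            simp only [hw, if_neg (by omega : ¬ K - 1 = 0), if_pos (by omega : K - 1 ≤ K), hcast]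
          have harg : π * (((K:ℝ)-1)/K) = π - π/K := by
            field_simp
          have hsin : Real.sin (π * (((K:ℝ)-1)/K)) = Real.sin (π/K) := by
            rw [harg, Real.sin_pi_sub]
          have hden : 0 < π * (((K:ℝ)-1)/K) := by
            apply mul_pos hπ
            apply div_pos (by linarith) hKR
          have hsnn : 0 ≤ Real.sin (π/K) := by
            apply Real.sin_nonneg_of_nonneg_of_le_pi (by positivity)
            exact div_le_self hπ.le (by exact_mod_cast (by omega : 1 ≤ K))
          have hsle : Real.sin (π/K) ≤ π/K := Real.sin_le (by positivity)
          have hble : Real.sin (π * (((K:ℝ)-1)/K)) / (π * (((K:ℝ)-1)/K)) ≤ 1/((K:ℝ)-1) := by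
            rw [hsin, div_le_div_iff₀ hden (by linarith)]
            have hid2 : π*(((K:ℝ)-1)/K) = (π/K)*((K:ℝ)-1) := by ring
            have hm := mul_le_mul_of_nonneg_right hsle (show (0:ℝ) ≤ (K:ℝ)-1 by linarith)
            linarith [hm]
          have hnn : 0 ≤ w (K-1) := by
            rw [hwKm, hsin]
            positivity
          have hval : 2 * (0:ℝ) - 0 - w (K-1) - 0 = -(w (K-1)) := by ring
          rw [hval, abs_neg, abs_of_nonneg hnn, hwKm]
          simp only [hg, if_neg (lt_irrefl K), if_pos rfl]
          calc 2 * (Real.sin (π * (((K:ℝ)-1) / K)) / (π * (((K:ℝ)-1) / K)))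
              ≤ 2 * (1/((K:ℝ)-1)) := by linarith [hble]
            _ = 2/((K:ℝ)-1) := by ring
        · have hke : k = K + 1 := by
            have := Finset.mem_range.mp hk; omega
          subst hke
          rw [hwK1, hwK2, if_neg (by omega : ¬ K + 1 = 0), if_neg (by omega : ¬ K + 1 = 1),
            Nat.add_sub_cancel, hwK]
          simp only [hg, if_neg (by omega : ¬ K + 1 < K), if_neg (by omega : ¬ K + 1 = K)]
          norm_num
  -- total bound
  have hgsum : (∑ k ∈ Finset.range (K+1+1), g k) = 2*π^2/(3*(K:ℝ)) + 2/((K:ℝ)-1) := by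
    rw [Finset.sum_range_succ, Finset.sum_range_succ]
    have hc1 : ∀ kk ∈ Finset.range K, g kk = 2*π^2/(3*(K:ℝ)^2) := by
      intro kk hkk
      simp only [hg, if_pos (Finset.mem_range.mp hkk)]
    rw [Finset.sum_congr rfl hc1, Finset.sum_const, Finset.card_range, nsmul_eq_mul]
    simp only [hg, if_neg (lt_irrefl K), if_pos rfl, if_true, ite_true,
      if_neg (by omega : ¬ K + 1 < K), if_neg (by omega : ¬ K + 1 = K)]
    have hcl : (K:ℝ) * (2*π^2/(3*(K:ℝ)^2)) = 2*π^2/(3*(K:ℝ)) := by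
      field_simp
    rw [hcl]
    ring
  have hDb : |∑ k ∈ Finset.range (K+1+1),
      (2 * w k - w (k + 1) - (if k = 0 then 0 else w (k - 1))
        - (if k = 1 then w 0 else 0)) * Real.cos ((k:ℝ) * x)|
      ≤ 2*π^2/(3*(K:ℝ)) + 2/((K:ℝ)-1) := by
    calc |∑ k ∈ Finset.range (K+1+1),
        (2 * w k - w (k + 1) - (if k = 0 then 0 else w (k - 1))
          - (if k = 1 then w 0 else 0)) * Real.cos ((k:ℝ) * x)|
        ≤ ∑ k ∈ Finset.range (K+1+1),
          |(2 * w k - w (k + 1) - (if k = 0 then 0 else w (k - 1))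
            - (if k = 1 then w 0 else 0)) * Real.cos ((k:ℝ) * x)| :=
          Finset.abs_sum_le_sum_abs _ _
      _ ≤ ∑ k ∈ Finset.range (K+1+1), g k := Finset.sum_le_sum hbound
      _ = 2*π^2/(3*(K:ℝ)) + 2/((K:ℝ)-1) := hgsum
  have hSK := numeric_bound K hK2
  rw [← hT]
  rcases le_or_gt x π with hxp | hxp
  · -- x ≤ π
    have hlow := jordan_low x hx0 hxp
    have hpos : (0:ℝ) < 2 - 2 * Real.cos x := lt_of_lt_of_le (by positivity) hlow
    have hmain : |∑ k ∈ Finset.range (K+1+1), w k * Real.cos ((k:ℝ) * x)| * (2 - 2*Real.cos x)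
        ≤ 2*π^2/(3*(K:ℝ)) + 2/((K:ℝ)-1) := by
      rw [show |∑ k ∈ Finset.range (K+1+1), w k * Real.cos ((k:ℝ) * x)| * (2 - 2*Real.cos x)
          = |(2 - 2*Real.cos x) * ∑ k ∈ Finset.range (K+1+1), w k * Real.cos ((k:ℝ) * x)| by
        rw [abs_mul, abs_of_pos hpos, mul_comm]]
      rw [hid]
      exact hDb
    have h2 : |∑ k ∈ Finset.range (K+1+1), w k * Real.cos ((k:ℝ) * x)| * (4*x^2/π^2)
        ≤ 152/(3*π*(K:ℝ)) :=
      le_trans (mul_le_mul_of_nonneg_left hlow (abs_nonneg _)) (le_trans hmain hSK)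
    have h3 : |∑ k ∈ Finset.range (K+1+1), w k * Real.cos ((k:ℝ) * x)|
        ≤ (152/(3*π*(K:ℝ)))/(4*x^2/π^2) :=
      (le_div_iff₀ (by positivity)).mpr h2
    have he : (152/(3*π*(K:ℝ)))/(4*x^2/π^2) = 38*π/(3*K*x^2) := by
      field_simp
      ring
    rw [he] at h3
    have hA : (0:ℝ) < 38/(3*π*(K:ℝ)) := by positivity
    have hC : (0:ℝ) < 38*π/(3*K*(x - 2*π)^2) := by
      have hne : x - 2*π < 0 := by linarith
      have hsq : (0:ℝ) < (x - 2*π)^2 := by nlinarith [mul_pos (neg_pos.mpr hne) (neg_pos.mpr hne)]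
      apply div_pos (by positivity)
      apply mul_pos (by positivity) hsq
    linarith
  · -- π < x
    have hlow := jordan_high x hx2 hxp.le
    have hpos : (0:ℝ) < 2 - 2 * Real.cos x := by
      have hne : x - 2*π < 0 := by linarith
      have hsq : (0:ℝ) < (x - 2*π)^2 := by nlinarith [mul_pos (neg_pos.mpr hne) (neg_pos.mpr hne)]
      exact lt_of_lt_of_le (by positivity) hlow
    have hmain : |∑ k ∈ Finset.range (K+1+1), w k * Real.cos ((k:ℝ) * x)| * (2 - 2*Real.cos x)
        ≤ 2*π^2/(3*(K:ℝ)) + 2/((K:ℝ)-1) := by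
      rw [show |∑ k ∈ Finset.range (K+1+1), w k * Real.cos ((k:ℝ) * x)| * (2 - 2*Real.cos x)
          = |(2 - 2*Real.cos x) * ∑ k ∈ Finset.range (K+1+1), w k * Real.cos ((k:ℝ) * x)| by
        rw [abs_mul, abs_of_pos hpos, mul_comm]]
      rw [hid]
      exact hDb
    have hne : x - 2*π < 0 := by linarith
    have hsq : (0:ℝ) < (x - 2*π)^2 := by nlinarith [mul_pos (neg_pos.mpr hne) (neg_pos.mpr hne)]
    have h2 : |∑ k ∈ Finset.range (K+1+1), w k * Real.cos ((k:ℝ) * x)| * (4*(x-2*π)^2/π^2)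
        ≤ 152/(3*π*(K:ℝ)) :=
      le_trans (mul_le_mul_of_nonneg_left hlow (abs_nonneg _)) (le_trans hmain hSK)
    have h3 : |∑ k ∈ Finset.range (K+1+1), w k * Real.cos ((k:ℝ) * x)|
        ≤ (152/(3*π*(K:ℝ)))/(4*(x-2*π)^2/π^2) := by
      apply (le_div_iff₀ ?_).mpr h2
      positivity
    have he : (152/(3*π*(K:ℝ)))/(4*(x-2*π)^2/π^2) = 38*π/(3*K*(x-2*π)^2) := by
      field_simp
      ring
    rw [he] at h3
    have hA : (0:ℝ) < 38/(3*π*(K:ℝ)) := by positivity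
    have hB : (0:ℝ) < 38*π/(3*K*x^2) := by positivity
    linarith
end
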